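/- arXiv:2210.09451 — 4 statements merged into one kernel-verified Lean document; each statement's English description precedes it below -/
import Mathlib

section
/- The reduction modulo 2 of Euler's Pentagonal Number Theorem: the infinite product f_1 = ∏_{i≥1}(1 - q^i), viewed as a formal power series over ℤ/2, equals the sum ∑_{n∈ℤ} q^{n(3n-1)/2}. -/
open scoped Classical

/-- `f a = ∏_{i ≥ 1} (1 - q^{a i})` as a formal power series over `ZMod 2`.
The `n`-th coefficient is computed from the (finite) truncated product, which is
legitimate since factors `1 - q^{a i}` with `a*i > n` do not affect degree `n`. -/
noncomputable def fZ2 (a : ℕ) : PowerSeries (ZMod 2) :=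
  PowerSeries.mk fun n =>
    PowerSeries.coeff n
      (∏ i ∈ Finset.Icc 1 (n + 1), (1 - (PowerSeries.X : PowerSeries (ZMod 2)) ^ (a * i)))

/-- The generalized pentagonal number `n(3n-1)/2` for `n : ℤ`. -/
def pent (n : ℤ) : ℤ := n * (3 * n - 1) / 2

/-- `∑_{n ∈ ℤ} q^{n(3n-1)/2}` over `ZMod 2`. -/
noncomputable def pentSeries : PowerSeries (ZMod 2) :=
  PowerSeries.mk fun m => if ∃ n : ℤ, pent n = (m : ℤ) then 1 else 0

open Finset

namespace PentAux

def mx (S : Finset ℕ) : ℕ := S.max.getD 0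
def mn (S : Finset ℕ) : ℕ := S.min.getD 0
noncomputable def bb (S : Finset ℕ) : ℕ := sInf {t | Finset.Icc t (mx S) ⊆ S}

def condA (S : Finset ℕ) : Prop :=
  Finset.Icc (mx S - mn S + 1) (mx S) ⊆ S ∧ 2 * mn S ≤ mx S
def condB (S : Finset ℕ) : Prop := ¬ condA S ∧ mx S + 3 ≤ 2 * bb S

noncomputable def phi (S : Finset ℕ) : Finset ℕ :=
  if condA S then insert (mx S + 1) ((S.erase (mn S)).erase (mx S - mn S + 1))
  else insert (mx S - bb S + 1) (insert (bb S - 1) (S.erase (mx S)))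

def Dn (n : ℕ) : Finset (Finset ℕ) :=
  (Finset.Icc 1 (n+1)).powerset.filter (fun t => ∑ i ∈ t, i = n)

variable {S : Finset ℕ} {a : ℕ}

lemma mx_mem (h : S.Nonempty) : mx S ∈ S := by
  obtain ⟨a, ha⟩ := Finset.max_of_nonempty h
  have := Finset.mem_of_max ha
  simpa [mx, ha]

lemma le_mx (ha : a ∈ S) : a ≤ mx S := by
  obtain ⟨m, hm⟩ := Finset.max_of_nonempty ⟨a, ha⟩
  have := Finset.le_max ha
  rw [hm] at this
  rw [mx, hm]; exact (by simpa using this : a ≤ m)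

lemma mn_mem (h : S.Nonempty) : mn S ∈ S := by
  obtain ⟨a, ha⟩ := Finset.min_of_nonempty h
  have := Finset.mem_of_min ha
  simpa [mn, ha]

lemma mn_le (ha : a ∈ S) : mn S ≤ a := by
  obtain ⟨m, hm⟩ := Finset.min_of_nonempty ⟨a, ha⟩
  have := Finset.min_le ha
  rw [hm] at this
  rw [mn, hm]; exact (by simpa using this : m ≤ a)

lemma mx_eq (h1 : a ∈ S) (h2 : ∀ x ∈ S, x ≤ a) : mx S = a :=
  le_antisymm (h2 _ (mx_mem ⟨a, h1⟩)) (le_mx h1)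

lemma mn_eq (h1 : a ∈ S) (h2 : ∀ x ∈ S, a ≤ x) : mn S = a :=
  le_antisymm (mn_le h1) (h2 _ (mn_mem ⟨a, h1⟩))

lemma bb_spec (h : S.Nonempty) : Finset.Icc (bb S) (mx S) ⊆ S := by
  have : {t | Finset.Icc t (mx S) ⊆ S}.Nonempty :=
    ⟨mx S, by simpa [Finset.Icc_self] using mx_mem h⟩
  exact Nat.sInf_mem this

lemma bb_le_of (ht : Finset.Icc a (mx S) ⊆ S) : bb S ≤ a := Nat.sInf_le ht

lemma bb_le_mx (h : S.Nonempty) : bb S ≤ mx S :=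
  bb_le_of (by simpa [Finset.Icc_self] using mx_mem h)

lemma bb_mem (h : S.Nonempty) : bb S ∈ S :=
  bb_spec h (Finset.mem_Icc.2 ⟨le_rfl, bb_le_mx h⟩)

lemma pred_bb_not_mem (h : S.Nonempty) (h1 : 1 ≤ bb S) : bb S - 1 ∉ S := by
  intro hmem
  have hsub : Finset.Icc (bb S - 1) (mx S) ⊆ S := by
    intro x hx
    rcases Finset.mem_Icc.1 hx with ⟨hx1, hx2⟩
    rcases eq_or_lt_of_le hx1 with rfl | hlt
    · exact hmem
    · exact bb_spec h (Finset.mem_Icc.2 ⟨by omega, hx2⟩)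
  have := bb_le_of hsub
  omega

lemma bb_eq (h : S.Nonempty) {t : ℕ} (h1 : Finset.Icc t (mx S) ⊆ S)
    (h2 : t - 1 ∉ S) (h3 : 1 ≤ t) (h4 : t ≤ mx S) : bb S = t := by
  have hle := bb_le_of h1
  rcases eq_or_lt_of_le hle with h' | h'
  · exact h'
  · exfalso
    exact h2 (bb_spec h (Finset.mem_Icc.2 ⟨by omega, by omega⟩))

lemma mx_Icc {p q : ℕ} (h : p ≤ q) : mx (Finset.Icc p q) = q := by
  have h1 : q ∈ Finset.Icc p q := Finset.mem_Icc.2 ⟨h, le_rfl⟩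
  have h2 := le_mx h1
  have h3 : mx (Finset.Icc p q) ∈ Finset.Icc p q := mx_mem ⟨q, h1⟩
  rcases Finset.mem_Icc.1 h3 with ⟨_, h4⟩
  omega

lemma mn_Icc {p q : ℕ} (h : p ≤ q) : mn (Finset.Icc p q) = p := by
  have h1 : p ∈ Finset.Icc p q := Finset.mem_Icc.2 ⟨le_rfl, h⟩
  have h2 := mn_le h1
  have h3 : mn (Finset.Icc p q) ∈ Finset.Icc p q := mn_mem ⟨p, h1⟩
  rcases Finset.mem_Icc.1 h3 with ⟨h4, _⟩
  omega

lemma bb_Icc {p q : ℕ} (h : p ≤ q) (hp : 1 ≤ p) : bb (Finset.Icc p q) = p := by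
  have hne : (Finset.Icc p q).Nonempty := ⟨p, Finset.mem_Icc.2 ⟨le_rfl, h⟩⟩
  refine bb_eq hne ?_ ?_ hp (by rw [mx_Icc h]; exact h)
  · rw [mx_Icc h]
  · intro hmem
    rcases Finset.mem_Icc.1 hmem with ⟨h1, _⟩
    omega

lemma mem_Dn_facts {n : ℕ} (hn : 1 ≤ n) (hS : S ∈ Dn n) :
    S.Nonempty ∧ (∀ a ∈ S, 1 ≤ a) ∧ (∀ a ∈ S, a ≤ n) ∧ ∑ i ∈ S, i = n := by
  rw [Dn, Finset.mem_filter, Finset.mem_powerset] at hS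
  obtain ⟨hsub, hsum⟩ := hS
  have hpos : ∀ a ∈ S, 1 ≤ a := fun a ha => (Finset.mem_Icc.1 (hsub ha)).1
  have hub : ∀ a ∈ S, a ≤ n := by
    intro a ha
    have h1 : a ≤ ∑ i ∈ S, i := Finset.single_le_sum (f := fun i => i) (fun i _ => Nat.zero_le i) ha
    omega
  refine ⟨?_, hpos, hub, hsum⟩
  rcases S.eq_empty_or_nonempty with rfl | h
  · simp at hsum; omega
  · exact h

lemma mem_Dn_iff {n : ℕ} {T : Finset ℕ} :
    T ∈ Dn n ↔ (∀ a ∈ T, 1 ≤ a ∧ a ≤ n + 1) ∧ ∑ i ∈ T, i = n := by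
  rw [Dn, Finset.mem_filter, Finset.mem_powerset]
  constructor
  · rintro ⟨h1, h2⟩
    exact ⟨fun a ha => Finset.mem_Icc.1 (h1 ha), h2⟩
  · rintro ⟨h1, h2⟩
    exact ⟨fun a ha => Finset.mem_Icc.2 (h1 a ha), h2⟩

lemma A_main {n : ℕ} (hn : 1 ≤ n) (hS : S ∈ Dn n) (hA : condA S) :
    phi S ∈ Dn n ∧ condB (phi S) ∧ phi (phi S) = S ∧ phi S ≠ S := by
  obtain ⟨hne, hpos, hub, hsum⟩ := mem_Dn_facts hn hS
  set m := mx S with hm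
  set s := mn S with hs
  have hmS : m ∈ S := mx_mem hne
  have hsS : s ∈ S := mn_mem hne
  have hs1 : 1 ≤ s := hpos _ hsS
  have hmn : m ≤ n := hub _ hmS
  have hsm : s ≤ m := le_mx hsS
  obtain ⟨hA1, hA2⟩ := hA
  rw [← hm, ← hs] at hA1 hA2
  have hms1 : m - s + 1 ∈ S := hA1 (Finset.mem_Icc.2 ⟨le_rfl, by omega⟩)
  have hslt : s < m - s + 1 := by omega
  have hm1 : m + 1 ∉ S := fun h => by have := le_mx h; omega
  have hT : phi S = insert (m + 1) ((S.erase s).erase (m - s + 1)) := by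
    rw [phi, if_pos ⟨by rw [← hm, ← hs]; exact hA1, by rw [← hm, ← hs]; exact hA2⟩]
  set T := insert (m + 1) ((S.erase s).erase (m - s + 1)) with hTdef
  have hmemT : ∀ x, x ∈ T ↔ x = m + 1 ∨ (x ∈ S ∧ x ≠ s ∧ x ≠ m - s + 1) := by
    intro x
    simp only [hTdef, Finset.mem_insert, Finset.mem_erase]
    tauto
  have hTne : T.Nonempty := ⟨m + 1, Finset.mem_insert_self _ _⟩
  have hmxT : mx T = m + 1 := by
    apply mx_eq (Finset.mem_insert_self _ _)
    intro x hx
    rcases (hmemT x).1 hx with rfl | ⟨hxS, _, _⟩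
    · exact le_rfl
    · have := le_mx hxS; omega
  have hmnT : s + 1 ≤ mn T ∧ mn T ≤ m + 1 := by
    constructor
    · have h1 := mn_mem hTne
      rcases (hmemT _).1 h1 with h2 | ⟨hxS, hne2, _⟩
      · omega
      · have := mn_le hxS; rw [← hs] at this; omega
    · exact mn_le (Finset.mem_insert_self _ _)
  have hms1T : m - s + 1 ∉ T := by
    intro h
    rcases (hmemT _).1 h with h2 | ⟨_, _, h3⟩
    · omega
    · exact h3 rfl
  have hbbT : bb T = m - s + 2 := by
    apply bb_eq hTne
    · rw [hmxT]
      intro x hx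
      rcases Finset.mem_Icc.1 hx with ⟨hx1, hx2⟩
      rcases eq_or_lt_of_le hx2 with rfl | hlt
      · exact Finset.mem_insert_self _ _
      · refine (hmemT x).2 (Or.inr ⟨hA1 (Finset.mem_Icc.2 ⟨by omega, by omega⟩), by omega, by omega⟩)
    · have : m - s + 2 - 1 = m - s + 1 := by omega
      rw [this]; exact hms1T
    · omega
    · rw [hmxT]; omega
  -- sums
  have e1 : m - s + 1 ∈ S.erase s := Finset.mem_erase.2 ⟨by omega, hms1⟩
  have e2 : m + 1 ∉ (S.erase s).erase (m - s + 1) := by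
    intro h
    exact hm1 (Finset.mem_of_mem_erase (Finset.mem_of_mem_erase h))
  have hsum1 : ∑ i ∈ T, i = (m + 1) + ∑ i ∈ (S.erase s).erase (m - s + 1), i := by
    rw [hTdef, Finset.sum_insert e2]
  have hsum2 : ∑ i ∈ (S.erase s).erase (m - s + 1), i + (m - s + 1) = ∑ i ∈ S.erase s, i :=
    Finset.sum_erase_add _ _ e1
  have hsum3 : ∑ i ∈ S.erase s, i + s = ∑ i ∈ S, i := Finset.sum_erase_add _ _ hsS
  have hsumT : ∑ i ∈ T, i = n := by omega
  have hTDn : T ∈ Dn n := by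
    rw [mem_Dn_iff]
    refine ⟨?_, hsumT⟩
    intro x hx
    rcases (hmemT x).1 hx with rfl | ⟨hxS, _, _⟩
    · omega
    · exact ⟨hpos _ hxS, by have := hub _ hxS; omega⟩
  have hnAT : ¬ condA T := by
    rintro ⟨hc1, _⟩
    have := bb_le_of hc1
    rw [hbbT, hmxT] at this
    omega
  have hBT : condB T := by
    refine ⟨hnAT, ?_⟩
    rw [hmxT, hbbT]
    omega
  have hphiT : phi T = S := by
    rw [phi, if_neg hnAT]
    have hv1 : mx T - bb T + 1 = s := by rw [hmxT, hbbT]; omega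
    have hv2 : bb T - 1 = m - s + 1 := by rw [hbbT]; omega
    rw [hv1, hv2, hmxT, hTdef, Finset.erase_insert e2, Finset.insert_erase e1,
      Finset.insert_erase hsS]
  have hneq : phi S ≠ S := by
    rw [hT]
    intro h
    exact hm1 (h ▸ Finset.mem_insert_self _ _)
  rw [hT]
  exact ⟨hTDn, hBT, hphiT, hT ▸ hneq⟩

lemma B_main {n : ℕ} (hn : 1 ≤ n) (hS : S ∈ Dn n) (hB : condB S) :
    phi S ∈ Dn n ∧ condA (phi S) ∧ phi (phi S) = S ∧ phi S ≠ S := by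
  obtain ⟨hne, hpos, hub, hsum⟩ := mem_Dn_facts hn hS
  set m := mx S with hm
  set s := mn S with hs
  set b := bb S with hb
  have hmS : m ∈ S := mx_mem hne
  have hsS : s ∈ S := mn_mem hne
  have hbS : b ∈ S := bb_mem hne
  have hs1 : 1 ≤ s := hpos _ hsS
  have hmn : m ≤ n := hub _ hmS
  have hsm : s ≤ m := le_mx hsS
  have hsb : s ≤ b := mn_le hbS
  have hbm : b ≤ m := bb_le_mx hne
  have hIcc : Finset.Icc b m ⊆ S := bb_spec hne
  have hb1 : 1 ≤ b := hpos _ hbS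
  have hbpred : b - 1 ∉ S := pred_bb_not_mem hne hb1
  obtain ⟨hnA, hBB⟩ := hB
  rw [← hm, ← hb] at hBB
  -- σ = m - b + 1 < s
  have hσs : m - b + 1 < s := by
    by_cases hc : Finset.Icc (m - s + 1) m ⊆ S
    · have h1 : b ≤ m - s + 1 := bb_le_of hc
      have h2 : ¬ (2 * s ≤ m) := by
        intro h2
        exact hnA ⟨by rw [← hm, ← hs]; exact hc, by rw [← hm, ← hs]; exact h2⟩
      omega
    · have h1 : m - s + 1 < b := by
        by_contra h1
        exact hc (fun x hx => hIcc (Finset.mem_Icc.2 ⟨by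
          rcases Finset.mem_Icc.1 hx with ⟨u, v⟩; omega,
          (Finset.mem_Icc.1 hx).2⟩))
      omega
  have hσS : m - b + 1 ∉ S := fun h => by have := mn_le h; omega
  have hU : phi S = insert (m - b + 1) (insert (b - 1) (S.erase m)) := by
    rw [phi, if_neg hnA]
  set U := insert (m - b + 1) (insert (b - 1) (S.erase m)) with hUdef
  have hmemU : ∀ x, x ∈ U ↔ x = m - b + 1 ∨ x = b - 1 ∨ (x ∈ S ∧ x ≠ m) := by
    intro x
    simp only [hUdef, Finset.mem_insert, Finset.mem_erase]
    tauto
  have hUne : U.Nonempty := ⟨m - b + 1, Finset.mem_insert_self _ _⟩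
  have hmxU : mx U = m - 1 := by
    apply mx_eq
    · by_cases hbm' : b ≤ m - 1
      · exact (hmemU _).2 (Or.inr (Or.inr ⟨hIcc (Finset.mem_Icc.2 ⟨hbm', by omega⟩), by omega⟩))
      · exact (hmemU _).2 (Or.inr (Or.inl (by omega)))
    · intro x hx
      rcases (hmemU x).1 hx with h1 | h1 | ⟨h1, h2⟩
      · omega
      · omega
      · have := le_mx h1; omega
  have hmnU : mn U = m - b + 1 := by
    apply mn_eq (Finset.mem_insert_self _ _)
    intro x hx
    rcases (hmemU x).1 hx with h1 | h1 | ⟨h1, h2⟩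
    · omega
    · omega
    · have := mn_le h1; rw [← hs] at this; omega
  -- sums
  have e0 : b - 1 ∉ S.erase m := fun h => hbpred (Finset.mem_of_mem_erase h)
  have e1 : m - b + 1 ∉ insert (b - 1) (S.erase m) := by
    intro h
    rcases Finset.mem_insert.1 h with h1 | h1
    · omega
    · exact hσS (Finset.mem_of_mem_erase h1)
  have hsum1 : ∑ i ∈ U, i = (m - b + 1) + ((b - 1) + ∑ i ∈ S.erase m, i) := by
    rw [hUdef, Finset.sum_insert e1, Finset.sum_insert e0]
  have hsum2 : ∑ i ∈ S.erase m, i + m = ∑ i ∈ S, i := Finset.sum_erase_add _ _ hmS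
  have hsumU : ∑ i ∈ U, i = n := by omega
  have hUDn : U ∈ Dn n := by
    rw [mem_Dn_iff]
    refine ⟨?_, hsumU⟩
    intro x hx
    rcases (hmemU x).1 hx with h1 | h1 | ⟨h1, h2⟩
    · omega
    · omega
    · exact ⟨hpos _ h1, by have := hub _ h1; omega⟩
  have hAU : condA U := by
    constructor
    · rw [hmxU, hmnU]
      intro x hx
      rcases Finset.mem_Icc.1 hx with ⟨hx1, hx2⟩
      have hx1' : b - 1 ≤ x := by omega
      rcases eq_or_lt_of_le hx1' with h' | h'
      · exact (hmemU x).2 (Or.inr (Or.inl h'.symm))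
      · exact (hmemU x).2 (Or.inr (Or.inr ⟨hIcc (Finset.mem_Icc.2 ⟨by omega, by omega⟩), by omega⟩))
    · rw [hmxU, hmnU]; omega
  have hphiU : phi U = S := by
    rw [phi, if_pos hAU]
    have hv1 : mx U + 1 = m := by rw [hmxU]; omega
    have hv2 : mx U - mn U + 1 = b - 1 := by rw [hmxU, hmnU]; omega
    rw [hv1, hv2, hmnU, hUdef, Finset.erase_insert e1, Finset.erase_insert e0,
      Finset.insert_erase hmS]
  have hneq : U ≠ S := by
    intro h
    have : m ∈ U := h.symm ▸ hmS
    rcases (hmemU m).1 this with h1 | h1 | ⟨_, h2⟩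
    · omega
    · omega
    · exact h2 rfl
  rw [hU]
  exact ⟨hUDn, hAU, hphiU, hneq⟩

lemma not_good {n : ℕ} (hn : 1 ≤ n) (hS : S ∈ Dn n) (h : ¬ condA S ∧ ¬ condB S) :
    ∃ s : ℕ, 1 ≤ s ∧ (S = Finset.Icc s (2*s-1) ∨ S = Finset.Icc (s+1) (2*s)) := by
  obtain ⟨hne, hpos, hub, hsum⟩ := mem_Dn_facts hn hS
  set m := mx S with hm
  set s := mn S with hs
  set b := bb S with hb
  have hmS : m ∈ S := mx_mem hne
  have hsS : s ∈ S := mn_mem hne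
  have hbS : b ∈ S := bb_mem hne
  have hs1 : 1 ≤ s := hpos _ hsS
  have hsm : s ≤ m := le_mx hsS
  have hsb : s ≤ b := mn_le hbS
  have hbm : b ≤ m := bb_le_mx hne
  have hIcc : Finset.Icc b m ⊆ S := bb_spec hne
  obtain ⟨hnA, hnB⟩ := h
  have h2b : 2 * b ≤ m + 2 := by
    by_contra h'
    exact hnB ⟨hnA, by omega⟩
  have hSIcc : S ⊆ Finset.Icc s m := fun x hx => Finset.mem_Icc.2 ⟨mn_le hx, le_mx hx⟩
  by_cases hc : Finset.Icc (m - s + 1) m ⊆ S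
  · have h1 : b ≤ m - s + 1 := bb_le_of hc
    have h2 : ¬ (2 * s ≤ m) := fun h2 => hnA ⟨hc, h2⟩
    -- b = s = m - s + 1, m = 2s - 1
    have hbs : b = s := by omega
    have hms : m = 2*s - 1 := by omega
    refine ⟨s, hs1, Or.inl ?_⟩
    have hEq : Finset.Icc s (2*s-1) = Finset.Icc b m := by rw [hbs, hms]
    refine Finset.Subset.antisymm ?_ (hEq ▸ hIcc)
    intro x hx
    exact Finset.mem_Icc.2 ⟨mn_le hx, by have := le_mx hx; omega⟩
  · have h1 : m - s + 1 < b := by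
      by_contra h1
      exact hc (fun x hx => hIcc (Finset.mem_Icc.2 ⟨by
        rcases Finset.mem_Icc.1 hx with ⟨u, v⟩; omega,
        (Finset.mem_Icc.1 hx).2⟩))
    have hbs : b = s := by omega
    have hms : m = 2*s - 2 := by omega
    have hs2 : 2 ≤ s := by omega
    refine ⟨s - 1, by omega, Or.inr ?_⟩
    have hEq : Finset.Icc (s-1+1) (2*(s-1)) = Finset.Icc b m := by
      congr 1 <;> omega
    exact Finset.Subset.antisymm
      (fun x hx => hEq ▸ (Finset.mem_Icc.2 ⟨by have := mn_le hx; omega, by have := le_mx hx; omega⟩))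
      (hEq ▸ hIcc)

lemma Icc1_bad {s : ℕ} (hs : 1 ≤ s) :
    ¬ condA (Finset.Icc s (2*s-1)) ∧ ¬ condB (Finset.Icc s (2*s-1)) := by
  have h : s ≤ 2*s-1 := by omega
  have h1 := mx_Icc h
  have h2 := mn_Icc h
  have h3 := bb_Icc h hs
  constructor
  · rintro ⟨_, hc2⟩
    rw [h1, h2] at hc2
    omega
  · rintro ⟨_, hc2⟩
    rw [h1, h3] at hc2
    omega

lemma Icc2_bad {s : ℕ} (hs : 1 ≤ s) :
    ¬ condA (Finset.Icc (s+1) (2*s)) ∧ ¬ condB (Finset.Icc (s+1) (2*s)) := by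
  have h : s + 1 ≤ 2*s := by omega
  have h1 := mx_Icc h
  have h2 := mn_Icc h
  have h3 := bb_Icc h (by omega)
  constructor
  · rintro ⟨hc1, _⟩
    rw [h1, h2] at hc1
    have : s ∈ Finset.Icc (2*s - (s+1) + 1) (2*s) := Finset.mem_Icc.2 ⟨by omega, by omega⟩
    have := hc1 this
    rcases Finset.mem_Icc.1 this with ⟨u, _⟩
    omega
  · rintro ⟨_, hc2⟩
    rw [h1, h3] at hc2
    omega

lemma gauss {a c : ℕ} (h : a ≤ c) : 2 * ∑ i ∈ Finset.Icc a c, i = (a + c) * (c + 1 - a) := by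
  obtain ⟨d, rfl⟩ : ∃ d, c = a + d := ⟨c - a, by omega⟩
  rw [← Finset.Ico_add_one_right_eq_Icc, Finset.sum_Ico_eq_sum_range]
  have h1 : a + d + 1 - a = d + 1 := by omega
  rw [h1]
  have h2 : ∀ i ∈ Finset.range (d+1), a + i = a + i := fun _ _ => rfl
  rw [Finset.sum_add_distrib, Finset.sum_const, Finset.card_range, smul_eq_mul]
  have h3 := Finset.sum_range_id_mul_two (d+1)
  have h4 : d + 1 - 1 = d := by omega
  rw [h4] at h3
  nlinarith [h3]

lemma even_card_of_involution {α : Type*} [DecidableEq α] :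
    ∀ (N : ℕ) (s : Finset α), s.card ≤ N → ∀ f : α → α,
      (∀ x ∈ s, f x ∈ s) → (∀ x ∈ s, f (f x) = x) → (∀ x ∈ s, f x ≠ x) →
      Even s.card := by
  intro N
  induction N with
  | zero =>
    intro s hs f _ _ _
    have h0 : s.card = 0 := by omega
    simp [h0]
  | succ N ih =>
    intro s hs f h1 h2 h3
    rcases s.eq_empty_or_nonempty with rfl | ⟨x, hx⟩
    · simp
    · have hfx : f x ∈ s := h1 x hx
      have hne : f x ≠ x := h3 x hx
      have hfxe : f x ∈ s.erase x := Finset.mem_erase.2 ⟨hne, hfx⟩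
      set t := (s.erase x).erase (f x) with ht
      have htsub : ∀ y, y ∈ t ↔ y ∈ s ∧ y ≠ x ∧ y ≠ f x := by
        intro y
        simp only [ht, Finset.mem_erase]
        tauto
      have hc1 : (s.erase x).card + 1 = s.card := Finset.card_erase_add_one hx
      have hc2 : t.card + 1 = (s.erase x).card := Finset.card_erase_add_one hfxe
      have hmap : ∀ y ∈ t, f y ∈ t := by
        intro y hy
        rcases (htsub y).1 hy with ⟨hys, hyx, hyfx⟩
        refine (htsub (f y)).2 ⟨h1 y hys, ?_, ?_⟩
        · intro hfy
          exact hyfx (by rw [← h2 y hys, hfy])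
        · intro hfy
          exact hyx (by rw [← h2 y hys, hfy, h2 x hx])
      have hev := ih t (by omega) f hmap
        (fun y hy => h2 y ((htsub y).1 hy).1)
        (fun y hy => h3 y ((htsub y).1 hy).1)
      obtain ⟨k, hk⟩ := hev
      exact ⟨k + 1, by omega⟩

end PentAux

lemma two_pent (k : ℤ) : 2 * pent k = k * (3*k - 1) := by
  have hdvd : (2:ℤ) ∣ k * (3*k - 1) := by
    rcases Int.even_or_odd k with ⟨t, ht⟩ | ⟨t, ht⟩
    · exact ⟨t * (3*k - 1), by rw [ht]; ring⟩
    · exact ⟨k * (3*t + 1), by rw [ht]; ring⟩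
  rw [pent, Int.mul_ediv_cancel' hdvd]

lemma pent_eq_iff {n : ℕ} (hn : 1 ≤ n) :
    (∃ k : ℤ, pent k = (n:ℤ)) ↔
      ∃ s : ℕ, 1 ≤ s ∧ (2*n + s = 3*s*s ∨ 2*n = 3*s*s + s) := by
  constructor
  · rintro ⟨k, hk⟩
    have h2 : 2 * (n:ℤ) = k * (3*k - 1) := by rw [← hk, two_pent]
    rcases lt_trichotomy k 0 with hneg | rfl | hpos
    · refine ⟨(-k).toNat, by omega, Or.inr ?_⟩
      have hkk : ((-k).toNat : ℤ) = -k := Int.toNat_of_nonneg (by omega)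
      have : 2 * (n:ℤ) = 3 * ((-k).toNat : ℤ) * ((-k).toNat : ℤ) + ((-k).toNat : ℤ) := by
        rw [hkk]; linear_combination h2
      exact_mod_cast this
    · simp [pent] at hk; omega
    · refine ⟨k.toNat, by omega, Or.inl ?_⟩
      have hkk : (k.toNat : ℤ) = k := Int.toNat_of_nonneg (by omega)
      have : 2 * (n:ℤ) + (k.toNat : ℤ) = 3 * (k.toNat : ℤ) * (k.toNat : ℤ) := by
        rw [hkk]; linear_combination h2
      exact_mod_cast this
  · rintro ⟨s, hs1, hcase | hcase⟩
    · refine ⟨(s:ℤ), ?_⟩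
      have h2 := two_pent (s:ℤ)
      have h3 : 2 * (n:ℤ) + (s:ℤ) = 3 * (s:ℤ) * (s:ℤ) := by exact_mod_cast hcase
      have h4 : (s:ℤ) * (3 * (s:ℤ) - 1) = 3 * (s:ℤ) * (s:ℤ) - (s:ℤ) := by ring
      omega
    · refine ⟨-(s:ℤ), ?_⟩
      have h2 := two_pent (-(s:ℤ))
      have h3 : 2 * (n:ℤ) = 3 * (s:ℤ) * (s:ℤ) + (s:ℤ) := by exact_mod_cast hcase
      have h4 : (-(s:ℤ)) * (3 * (-(s:ℤ)) - 1) = 3 * (s:ℤ) * (s:ℤ) + (s:ℤ) := by ring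
      omega

namespace PentAux

lemma aux1 {t : ℕ} (h : 1 ≤ t) : (3*t-1)*t + t = 3*t*t := by
  obtain ⟨u, rfl⟩ : ∃ u, t = u + 1 := ⟨t - 1, by omega⟩
  have e : 3*(u+1)-1 = 3*u+2 := by omega
  rw [e]; ring

lemma bad_char {n : ℕ} (hn : 1 ≤ n) {S : Finset ℕ} (hS : S ∈ Dn n)
    (hb : ¬(condA S ∨ condB S)) :
    ∃ t : ℕ, 1 ≤ t ∧ ((S = Finset.Icc t (2*t-1) ∧ 2*n + t = 3*t*t) ∨
      (S = Finset.Icc (t+1) (2*t) ∧ 2*n = 3*t*t + t)) := by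
  rw [not_or] at hb
  obtain ⟨t, ht1, hcase⟩ := not_good hn hS ⟨hb.1, hb.2⟩
  have hsum := (mem_Dn_facts hn hS).2.2.2
  rcases hcase with h | h
  · refine ⟨t, ht1, Or.inl ⟨h, ?_⟩⟩
    rw [h] at hsum
    have hg := gauss (show t ≤ 2*t-1 by omega)
    rw [hsum] at hg
    have e1 : t + (2*t-1) = 3*t-1 := by omega
    have e2 : 2*t-1+1-t = t := by omega
    rw [e1, e2] at hg
    have ha := aux1 ht1
    linarith
  · refine ⟨t, ht1, Or.inr ⟨h, ?_⟩⟩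
    rw [h] at hsum
    have hg := gauss (show t+1 ≤ 2*t by omega)
    rw [hsum] at hg
    have e1 : t+1 + 2*t = 3*t+1 := by omega
    have e2 : 2*t+1-(t+1) = t := by omega
    rw [e1, e2] at hg
    have ha : (3*t+1)*t = 3*t*t + t := by ring
    linarith

lemma Icc1_mem_Dn {n t : ℕ} (h1 : 1 ≤ t) (he : 2*n + t = 3*t*t) :
    Finset.Icc t (2*t-1) ∈ Dn n := by
  have h5t : 5*t ≤ 2*n + 4 := by
    rcases eq_or_lt_of_le h1 with h' | h'
    · rw [← h'] at he ⊢; omega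
    · have htt : 2*t ≤ t*t := Nat.mul_le_mul_right t (by omega)
      linarith
  rw [mem_Dn_iff]
  constructor
  · intro x hx
    rcases Finset.mem_Icc.1 hx with ⟨u, v⟩
    omega
  · have hg := gauss (show t ≤ 2*t-1 by omega)
    have e1 : t + (2*t-1) = 3*t-1 := by omega
    have e2 : 2*t-1+1-t = t := by omega
    rw [e1, e2] at hg
    have ha := aux1 h1
    have : 2 * ∑ i ∈ Finset.Icc t (2*t-1), i = 2 * n := by linarith
    omega

lemma Icc2_mem_Dn {n t : ℕ} (h1 : 1 ≤ t) (he : 2*n = 3*t*t + t) :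
    Finset.Icc (t+1) (2*t) ∈ Dn n := by
  have htt : t ≤ t*t := Nat.le_mul_of_pos_left t h1
  have h4t : 4*t ≤ 2*n := by linarith
  rw [mem_Dn_iff]
  constructor
  · intro x hx
    rcases Finset.mem_Icc.1 hx with ⟨u, v⟩
    omega
  · have hg := gauss (show t+1 ≤ 2*t by omega)
    have e1 : t+1 + 2*t = 3*t+1 := by omega
    have e2 : 2*t+1-(t+1) = t := by omega
    rw [e1, e2] at hg
    have ha : (3*t+1)*t = 3*t*t + t := by ring
    have : 2 * ∑ i ∈ Finset.Icc (t+1) (2*t), i = 2 * n := by linarith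
    omega

lemma sum_unique {n s t : ℕ} (hs : 1 ≤ s) (ht : 1 ≤ t) :
    (2*n + s = 3*s*s → 2*n + t = 3*t*t → s = t) ∧
    (2*n = 3*s*s + s → 2*n = 3*t*t + t → s = t) ∧
    (2*n + s = 3*s*s → 2*n = 3*t*t + t → False) := by
  refine ⟨?_, ?_, ?_⟩
  · intro e1 e2
    have he1 : 2*(n:ℤ) + (s:ℤ) = 3*(s:ℤ)*(s:ℤ) := by exact_mod_cast e1
    have he2 : 2*(n:ℤ) + (t:ℤ) = 3*(t:ℤ)*(t:ℤ) := by exact_mod_cast e2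
    have hf : ((s:ℤ) - t) * (3*(s:ℤ) + 3*(t:ℤ) - 1) = 0 := by linear_combination he2 - he1
    rcases mul_eq_zero.1 hf with h | h <;> omega
  · intro e1 e2
    have he1 : 2*(n:ℤ) = 3*(s:ℤ)*(s:ℤ) + (s:ℤ) := by exact_mod_cast e1
    have he2 : 2*(n:ℤ) = 3*(t:ℤ)*(t:ℤ) + (t:ℤ) := by exact_mod_cast e2
    have hf : ((s:ℤ) - t) * (3*(s:ℤ) + 3*(t:ℤ) + 1) = 0 := by linear_combination he2 - he1
    rcases mul_eq_zero.1 hf with h | h <;> omega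
  · intro e1 e2
    have he1 : 2*(n:ℤ) + (s:ℤ) = 3*(s:ℤ)*(s:ℤ) := by exact_mod_cast e1
    have he2 : 2*(n:ℤ) = 3*(t:ℤ)*(t:ℤ) + (t:ℤ) := by exact_mod_cast e2
    have hf : ((s:ℤ) + t) * (3*(s:ℤ) - 3*(t:ℤ) - 1) = 0 := by linear_combination he2 - he1
    rcases mul_eq_zero.1 hf with h | h <;> omega

end PentAux

namespace PentAux

lemma coeff_fZ2 (n : ℕ) : PowerSeries.coeff n (fZ2 1) = ((Dn n).card : ZMod 2) := by
  have hchar : ∀ f : PowerSeries (ZMod 2), 1 - f = 1 + f := by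
    intro f
    have hf : -f = f := by
      apply neg_eq_of_add_eq_zero_left
      ext k
      simp only [map_add, map_zero]
      exact CharTwo.add_self_eq_zero _
    rw [sub_eq_add_neg, hf]
  rw [fZ2, PowerSeries.coeff_mk]
  simp only [one_mul]
  calc PowerSeries.coeff n (∏ i ∈ Finset.Icc 1 (n + 1), (1 - PowerSeries.X ^ i))
      = PowerSeries.coeff n (∏ i ∈ Finset.Icc 1 (n + 1), (PowerSeries.X ^ i + 1)) := by
        congr 1; refine Finset.prod_congr rfl fun i _ => ?_
        rw [hchar, add_comm]
    _ = PowerSeries.coeff n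
        (∑ t ∈ (Finset.Icc 1 (n+1)).powerset,
          (PowerSeries.X : PowerSeries (ZMod 2)) ^ (∑ i ∈ t, i)) := by
        rw [Finset.prod_add]
        congr 1
        refine Finset.sum_congr rfl fun t _ => ?_
        rw [Finset.prod_const_one, mul_one]
        exact Finset.prod_pow_eq_pow_sum t id (PowerSeries.X : PowerSeries (ZMod 2))
    _ = ∑ t ∈ (Finset.Icc 1 (n+1)).powerset, if (∑ i ∈ t, i) = n then 1 else 0 := by
        rw [map_sum]
        refine Finset.sum_congr rfl fun t _ => ?_
        rw [PowerSeries.coeff_X_pow]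
        simp [eq_comm]
    _ = ((Dn n).card : ZMod 2) := by
        rw [Finset.sum_boole, Dn]

lemma card_Dn {n : ℕ} (hn : 1 ≤ n) :
    (((Dn n).card : ℕ) : ZMod 2) = if ∃ k : ℤ, pent k = (n:ℤ) then 1 else 0 := by
  classical
  set G := (Dn n).filter (fun S => condA S ∨ condB S) with hG
  set Bad := (Dn n).filter (fun S => ¬(condA S ∨ condB S)) with hBad
  have hsplit : G.card + Bad.card = (Dn n).card :=
    Finset.card_filter_add_card_filter_not (p := fun S => condA S ∨ condB S)
  have hmem : ∀ S ∈ G, phi S ∈ G ∧ phi (phi S) = S ∧ phi S ≠ S := by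
    intro S hSG
    rw [hG, Finset.mem_filter] at hSG
    obtain ⟨hSD, hAB⟩ := hSG
    rcases hAB with hA | hB
    · obtain ⟨d1, d2, d3, d4⟩ := A_main hn hSD hA
      exact ⟨by rw [hG, Finset.mem_filter]; exact ⟨d1, Or.inr d2⟩, d3, d4⟩
    · obtain ⟨d1, d2, d3, d4⟩ := B_main hn hSD hB
      exact ⟨by rw [hG, Finset.mem_filter]; exact ⟨d1, Or.inl d2⟩, d3, d4⟩
  have heven : Even G.card :=
    even_card_of_involution G.card G le_rfl phi (fun x hx => (hmem x hx).1)
      (fun x hx => (hmem x hx).2.1) (fun x hx => (hmem x hx).2.2)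
  have hbad : Bad.card = if ∃ k : ℤ, pent k = (n:ℤ) then 1 else 0 := by
    by_cases hp : ∃ k : ℤ, pent k = (n:ℤ)
    · rw [if_pos hp]
      obtain ⟨t, ht1, hcase⟩ := (pent_eq_iff hn).1 hp
      rw [Finset.card_eq_one]
      rcases hcase with hc | hc
      · refine ⟨Finset.Icc t (2*t-1), ?_⟩
        rw [Finset.eq_singleton_iff_unique_mem]
        constructor
        · rw [hBad, Finset.mem_filter]
          refine ⟨Icc1_mem_Dn ht1 hc, ?_⟩
          have := Icc1_bad ht1
          tauto
        · intro S hSB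
          rw [hBad, Finset.mem_filter] at hSB
          obtain ⟨u, hu1, hucase⟩ := bad_char hn hSB.1 hSB.2
          rcases hucase with ⟨hform, hsum⟩ | ⟨hform, hsum⟩
          · have huv : u = t := (sum_unique hu1 ht1).1 hsum hc
            rw [hform, huv]
          · exact ((sum_unique ht1 hu1).2.2 hc hsum).elim
      · refine ⟨Finset.Icc (t+1) (2*t), ?_⟩
        rw [Finset.eq_singleton_iff_unique_mem]
        constructor
        · rw [hBad, Finset.mem_filter]
          refine ⟨Icc2_mem_Dn ht1 hc, ?_⟩
          have := Icc2_bad ht1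
          tauto
        · intro S hSB
          rw [hBad, Finset.mem_filter] at hSB
          obtain ⟨u, hu1, hucase⟩ := bad_char hn hSB.1 hSB.2
          rcases hucase with ⟨hform, hsum⟩ | ⟨hform, hsum⟩
          · exact ((sum_unique hu1 ht1).2.2 hsum hc).elim
          · have huv : u = t := (sum_unique hu1 ht1).2.1 hsum hc
            rw [hform, huv]
    · rw [if_neg hp, Finset.card_eq_zero, hBad, Finset.eq_empty_iff_forall_notMem]
      intro S hSB
      rw [Finset.mem_filter] at hSB
      obtain ⟨u, hu1, hucase⟩ := bad_char hn hSB.1 hSB.2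
      apply hp
      apply (pent_eq_iff hn).2
      rcases hucase with ⟨_, hsum⟩ | ⟨_, hsum⟩
      · exact ⟨u, hu1, Or.inl hsum⟩
      · exact ⟨u, hu1, Or.inr hsum⟩
  rw [← hsplit, Nat.cast_add]
  obtain ⟨k, hk⟩ := heven
  have hzero : ((G.card : ℕ) : ZMod 2) = 0 := by
    rw [hk]
    push_cast
    have h2 : (k : ZMod 2) + k = 2 * k := by ring
    rw [h2, show (2 : ZMod 2) = 0 by decide, zero_mul]
  rw [hzero, zero_add, hbad]
  split_ifs <;> simp

lemma Dn_zero : Dn 0 = {∅} := by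
  ext t
  simp only [Dn, Finset.mem_filter, Finset.mem_powerset, Finset.mem_singleton]
  constructor
  · rintro ⟨hsub, hsum⟩
    rw [Finset.eq_empty_iff_forall_notMem]
    intro x hx
    have h1 := (Finset.mem_Icc.1 (hsub hx)).1
    have h2 := Finset.sum_eq_zero_iff.1 hsum x hx
    omega
  · rintro rfl
    simp

end PentAux

/-- Euler's Pentagonal Number Theorem reduced modulo 2:
`∏_{i≥1}(1-q^i) = ∑_{n∈ℤ} q^{n(3n-1)/2}` over `ℤ/2`. -/
theorem pentagonal_mod_two : fZ2 1 = pentSeries := by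
  ext n
  rw [PentAux.coeff_fZ2, pentSeries, PowerSeries.coeff_mk]
  rcases Nat.eq_zero_or_pos n with rfl | hn
  · rw [PentAux.Dn_zero]
    rw [if_pos ⟨0, by norm_num [pent]⟩]
    simp
  · exact PentAux.card_Dn hn
end

section
/- The coefficient of q^n in the series f_1/(1-q) is odd if and only if the number of generalized pentagonal numbers ≤ n is odd; equivalently, the mod-2 reduction of f_1/(1-q) alternates strings of 1-coefficients and 0-coefficients, where a new string begins exactly at each generalized pentagonal number. -/
open scoped Classical

/-- `1/(1-q) = ∑_{j ≥ 0} q^j` over `ZMod 2`. -/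
noncomputable def geomZ2 : PowerSeries (ZMod 2) := PowerSeries.mk fun _ => 1

open Finset


noncomputable def smax (t : Finset ℕ) : ℕ := if h : t.Nonempty then t.max' h else 0
noncomputable def smin (t : Finset ℕ) : ℕ := if h : t.Nonempty then t.min' h else 0
noncomputable def rb (t : Finset ℕ) : ℕ :=
  if h : (t.filter (fun x => Finset.Icc x (smax t) ⊆ t)).Nonempty
  then (t.filter (fun x => Finset.Icc x (smax t) ⊆ t)).min' h else 0

lemma smax_mem {t : Finset ℕ} (h : t.Nonempty) : smax t ∈ t := by
  rw [smax, dif_pos h]; exact t.max'_mem h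
lemma smin_mem {t : Finset ℕ} (h : t.Nonempty) : smin t ∈ t := by
  rw [smin, dif_pos h]; exact t.min'_mem h
lemma le_smax {t : Finset ℕ} {x : ℕ} (hx : x ∈ t) : x ≤ smax t := by
  rw [smax, dif_pos ⟨x, hx⟩]; exact Finset.le_max' t x hx
lemma smin_le {t : Finset ℕ} {x : ℕ} (hx : x ∈ t) : smin t ≤ x := by
  rw [smin, dif_pos ⟨x, hx⟩]; exact Finset.min'_le t x hx

lemma run_nonempty {t : Finset ℕ} (h : t.Nonempty) :
    (t.filter (fun x => Finset.Icc x (smax t) ⊆ t)).Nonempty := by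
  refine ⟨smax t, Finset.mem_filter.2 ⟨smax_mem h, ?_⟩⟩
  rw [Finset.Icc_self]; simpa using smax_mem h

lemma rb_mem_filter {t : Finset ℕ} (h : t.Nonempty) :
    rb t ∈ t.filter (fun x => Finset.Icc x (smax t) ⊆ t) := by
  rw [rb, dif_pos (run_nonempty h)]; exact Finset.min'_mem _ _

lemma rb_mem {t : Finset ℕ} (h : t.Nonempty) : rb t ∈ t :=
  (Finset.mem_filter.1 (rb_mem_filter h)).1
lemma rb_run {t : Finset ℕ} (h : t.Nonempty) : Finset.Icc (rb t) (smax t) ⊆ t :=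
  (Finset.mem_filter.1 (rb_mem_filter h)).2
lemma rb_le {t : Finset ℕ} (h : t.Nonempty) {x : ℕ} (hx : x ∈ t)
    (hr : Finset.Icc x (smax t) ⊆ t) : rb t ≤ x := by
  rw [rb, dif_pos (run_nonempty h)]
  exact Finset.min'_le _ x (Finset.mem_filter.2 ⟨hx, hr⟩)

lemma rb_pred_not_mem {t : Finset ℕ} (h : t.Nonempty) (h1 : 1 ≤ rb t) : rb t - 1 ∉ t := by
  intro hm
  have hr : Finset.Icc (rb t - 1) (smax t) ⊆ t := by
    intro x hx
    rcases Finset.mem_Icc.1 hx with ⟨h1x, h2x⟩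
    rcases eq_or_lt_of_le h1x with h' | h'
    · exact h' ▸ hm
    · exact rb_run h (Finset.mem_Icc.2 ⟨by omega, h2x⟩)
  have := rb_le h hm hr
  omega

lemma subset_Icc_minmax {t : Finset ℕ} : t ⊆ Finset.Icc (smin t) (smax t) := fun x hx =>
  Finset.mem_Icc.2 ⟨smin_le hx, le_smax hx⟩

lemma smin_Icc {a b : ℕ} (h : a ≤ b) : smin (Finset.Icc a b) = a := by
  have hm : a ∈ Finset.Icc a b := Finset.mem_Icc.2 ⟨le_refl a, h⟩
  refine le_antisymm (smin_le hm) ?_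
  exact (Finset.mem_Icc.1 (smin_mem ⟨a, hm⟩)).1

lemma smax_Icc {a b : ℕ} (h : a ≤ b) : smax (Finset.Icc a b) = b := by
  have hm : b ∈ Finset.Icc a b := Finset.mem_Icc.2 ⟨h, le_refl b⟩
  refine le_antisymm ?_ (le_smax hm)
  exact (Finset.mem_Icc.1 (smax_mem ⟨b, hm⟩)).2

lemma twice_sum_Icc (a b : ℕ) (h : a ≤ b) :
    2 * ∑ i ∈ Finset.Icc a b, i = (a + b) * (b + 1 - a) := by
  have hIco : Finset.Icc a b = Finset.Ico a (b+1) := by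
    rw [Nat.Icc_eq_range', Nat.Ico_eq_range']
  rw [hIco, Finset.sum_Ico_eq_sum_range]
  obtain ⟨n, hn⟩ : ∃ n, b + 1 - a = n + 1 := ⟨b - a, by omega⟩
  have hb : b = a + n := by omega
  rw [hn]
  have h2 := Finset.sum_range_id_mul_two (n + 1)
  have h3 : ∑ i ∈ Finset.range (n+1), (a + i)
      = (n+1) * a + ∑ i ∈ Finset.range (n+1), i := by
    rw [Finset.sum_add_distrib, Finset.sum_const, Finset.card_range, smul_eq_mul]
  subst hb
  rw [h3]
  simp only [Nat.add_sub_cancel] at h2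
  nlinarith [h2]

def isExc (t : Finset ℕ) : Prop :=
  t = Finset.Icc (smin t) (2 * smin t - 1) ∨ t = Finset.Icc (smin t) (2 * smin t - 2)

noncomputable def frank (t : Finset ℕ) : Finset ℕ :=
  if smin t + rb t ≤ smax t + 1 then
    insert (smax t + 1) ((t.erase (smin t)).erase (smax t - smin t + 1))
  else
    insert (smax t + 1 - rb t) (insert (rb t - 1) (t.erase (smax t)))

set_option maxHeartbeats 2000000 in
lemma frank_case1 (t : Finset ℕ) (hne : t.Nonempty) (hpos : ∀ x ∈ t, 1 ≤ x)
    (hexc : ¬ isExc t) (hc : smin t + rb t ≤ smax t + 1) :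
    (frank t).sum id = t.sum id ∧ (frank t).Nonempty ∧ (∀ x ∈ frank t, 1 ≤ x) ∧
      ¬ isExc (frank t) ∧ frank (frank t) = t ∧ frank t ≠ t := by
  have hsM : smin t ≤ smax t := smin_le (smax_mem hne)
  have hbM : rb t ≤ smax t := le_smax (rb_mem hne)
  have hsb : smin t ≤ rb t := smin_le (rb_mem hne)
  have hs1 : 1 ≤ smin t := hpos _ (smin_mem hne)
  have h2s : 2 * smin t ≤ smax t := by
    by_contra hcon
    have hbs : rb t = smin t := by omega
    have hts : t = Finset.Icc (smin t) (smax t) := by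
      refine Finset.Subset.antisymm subset_Icc_minmax ?_
      have h1 := rb_run hne
      rwa [hbs] at h1
    have hM2 : smax t = 2 * smin t - 1 := by omega
    exact hexc (Or.inl (by rw [← hM2, ← hts]))
  have hMs : smax t - smin t + 1 ∈ t := rb_run hne (Finset.mem_Icc.2 ⟨by omega, by omega⟩)
  have hss : smin t < smax t - smin t + 1 := by omega
  have hM1 : smax t + 1 ∉ t := fun h => by have := le_smax h; omega
  have hfr : frank t = insert (smax t + 1) ((t.erase (smin t)).erase (smax t - smin t + 1)) := by
    rw [frank, if_pos hc]
  have hmem : ∀ x, x ∈ frank t ↔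
      x = smax t + 1 ∨ (x ∈ t ∧ x ≠ smin t ∧ x ≠ smax t - smin t + 1) := by
    intro x
    rw [hfr]
    simp only [Finset.mem_insert, Finset.mem_erase]
    tauto
  have hsum : (frank t).sum id = t.sum id := by
    have e1 : smin t + (t.erase (smin t)).sum id = t.sum id :=
      Finset.add_sum_erase _ id (smin_mem hne)
    have e2 : (smax t - smin t + 1) +
        ((t.erase (smin t)).erase (smax t - smin t + 1)).sum id = (t.erase (smin t)).sum id :=
      Finset.add_sum_erase _ id (Finset.mem_erase.2 ⟨by omega, hMs⟩)
    have e3 : (frank t).sum id = (smax t + 1) +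
        ((t.erase (smin t)).erase (smax t - smin t + 1)).sum id := by
      rw [hfr]
      refine Finset.sum_insert ?_
      intro hcon
      exact hM1 (Finset.mem_of_mem_erase (Finset.mem_of_mem_erase hcon))
    simp only [id] at e1 e2 e3 ⊢
    omega
  have hmaxmem : smax t + 1 ∈ frank t := (hmem _).2 (Or.inl rfl)
  have hne' : (frank t).Nonempty := ⟨_, hmaxmem⟩
  have hmin' : ∀ x ∈ frank t, smin t + 1 ≤ x := by
    intro x hx
    rcases (hmem x).1 hx with h | ⟨h, h2, -⟩
    · omega
    · have := smin_le h; omega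
  have hpos' : ∀ x ∈ frank t, 1 ≤ x := fun x hx => by have := hmin' x hx; omega
  have hmax' : smax (frank t) = smax t + 1 := by
    refine le_antisymm ?_ (le_smax hmaxmem)
    rcases (hmem _).1 (smax_mem hne') with h | ⟨h, -, -⟩
    · omega
    · have := le_smax h; omega
  have hsmin' : smin t + 1 ≤ smin (frank t) := hmin' _ (smin_mem hne')
  have hMs1' : smax t - smin t + 1 ∉ frank t := by
    intro hcon
    rcases (hmem _).1 hcon with h | ⟨-, -, h⟩
    · omega
    · exact h rfl
  have hrb' : rb (frank t) = smax t - smin t + 2 := by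
    have hub : rb (frank t) ≤ smax t - smin t + 2 := by
      refine rb_le hne' ?_ ?_
      · rcases Nat.lt_or_ge (smin t) 2 with h1 | h1
        · refine (hmem _).2 (Or.inl (by omega))
        · refine (hmem _).2 (Or.inr ⟨rb_run hne (Finset.mem_Icc.2 ⟨by omega, by omega⟩),
            by omega, by omega⟩)
      · intro x hx
        rcases Finset.mem_Icc.1 hx with ⟨h1x, h2x⟩
        rw [hmax'] at h2x
        rcases Nat.lt_or_ge x (smax t + 1) with h3 | h3
        · refine (hmem _).2 (Or.inr ⟨rb_run hne (Finset.mem_Icc.2 ⟨by omega, by omega⟩),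
            by omega, by omega⟩)
        · refine (hmem _).2 (Or.inl (by omega))
    have hlb : smax t - smin t + 2 ≤ rb (frank t) := by
      by_contra hcon
      apply hMs1'
      refine rb_run hne' (Finset.mem_Icc.2 ⟨by omega, ?_⟩)
      rw [hmax']; omega
    omega
  have hc' : ¬ (smin (frank t) + rb (frank t) ≤ smax (frank t) + 1) := by
    rw [hmax', hrb']; omega
  have hexc' : ¬ isExc (frank t) := by
    intro hcon
    have hminlb : smax t - smin t + 2 ≤ smin (frank t) := by
      by_contra hcon2
      apply hMs1'
      rcases hcon with h | h
      · rw [h, Finset.mem_Icc]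
        have := smax_Icc (show smin (frank t) ≤ 2 * smin (frank t) - 1 by omega)
        rw [← h, hmax'] at this
        omega
      · rw [h, Finset.mem_Icc]
        have := smax_Icc (show smin (frank t) ≤ 2 * smin (frank t) - 2 by
          have := smin_le (smax_mem hne'); rw [hmax'] at this
          have h2 := congrArg smax h
          rw [hmax'] at h2
          omega)
        rw [← h, hmax'] at this
        omega
    rcases hcon with h | h
    · have h2 := congrArg smax h
      rw [hmax', smax_Icc (by omega)] at h2
      omega
    · have h2 := congrArg smax h
      rw [hmax', smax_Icc (by omega)] at h2
      omega
  have hff : frank (frank t) = t := by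
    rw [frank, if_neg hc', hmax', hrb']
    have e1 : smax t + 1 + 1 - (smax t - smin t + 2) = smin t := by omega
    have e2 : smax t - smin t + 2 - 1 = smax t - smin t + 1 := by omega
    rw [e1, e2, hfr, Finset.erase_insert (fun hcon =>
      hM1 (Finset.mem_of_mem_erase (Finset.mem_of_mem_erase hcon)))]
    rw [Finset.insert_erase (Finset.mem_erase.2 ⟨by omega, hMs⟩),
      Finset.insert_erase (smin_mem hne)]
  refine ⟨hsum, hne', hpos', hexc', hff, fun h => hM1 ?_⟩
  rw [h] at hmaxmem
  exact hmaxmem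

set_option maxHeartbeats 2000000 in
lemma frank_case2 (t : Finset ℕ) (hne : t.Nonempty) (hpos : ∀ x ∈ t, 1 ≤ x)
    (hexc : ¬ isExc t) (hc : ¬ (smin t + rb t ≤ smax t + 1)) :
    (frank t).sum id = t.sum id ∧ (frank t).Nonempty ∧ (∀ x ∈ frank t, 1 ≤ x) ∧
      ¬ isExc (frank t) ∧ frank (frank t) = t ∧ frank t ≠ t := by
  have hsM : smin t ≤ smax t := smin_le (smax_mem hne)
  have hbM : rb t ≤ smax t := le_smax (rb_mem hne)
  have hsb : smin t ≤ rb t := smin_le (rb_mem hne)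
  have hs1 : 1 ≤ smin t := hpos _ (smin_mem hne)
  have h2b : 2 * rb t ≥ smax t + 3 := by
    by_contra hcon
    have hbs : rb t = smin t := by omega
    have hts : t = Finset.Icc (smin t) (smax t) := by
      refine Finset.Subset.antisymm subset_Icc_minmax ?_
      have h1 := rb_run hne
      rwa [hbs] at h1
    have hM2 : smax t = 2 * smin t - 2 := by omega
    exact hexc (Or.inr (by rw [← hM2, ← hts]))
  have hq : rb t - 1 ∉ t := rb_pred_not_mem hne (by omega)
  have hp : smax t + 1 - rb t ∉ t := fun h => by have := smin_le h; omega
  have hMt : smax t ∈ t := smax_mem hne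
  have hfr : frank t = insert (smax t + 1 - rb t)
      (insert (rb t - 1) (t.erase (smax t))) := by
    rw [frank, if_neg hc]
  have hmem : ∀ x, x ∈ frank t ↔
      x = smax t + 1 - rb t ∨ x = rb t - 1 ∨ (x ∈ t ∧ x ≠ smax t) := by
    intro x
    rw [hfr]
    simp only [Finset.mem_insert, Finset.mem_erase]
    tauto
  have hnotin1 : rb t - 1 ∉ t.erase (smax t) := fun hcon =>
    hq (Finset.mem_of_mem_erase hcon)
  have hnotin2 : smax t + 1 - rb t ∉ insert (rb t - 1) (t.erase (smax t)) := by
    intro hcon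
    rcases Finset.mem_insert.1 hcon with h | h
    · omega
    · exact hp (Finset.mem_of_mem_erase h)
  have hsum : (frank t).sum id = t.sum id := by
    have e1 : smax t + (t.erase (smax t)).sum id = t.sum id :=
      Finset.add_sum_erase _ id hMt
    have e2 : (frank t).sum id = (smax t + 1 - rb t) +
        ((rb t - 1) + (t.erase (smax t)).sum id) := by
      rw [hfr, Finset.sum_insert hnotin2, Finset.sum_insert hnotin1]
      simp [id]
    simp only [id] at e1 e2 ⊢
    omega
  have hpmem : smax t + 1 - rb t ∈ frank t := (hmem _).2 (Or.inl rfl)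
  have hqmem : rb t - 1 ∈ frank t := (hmem _).2 (Or.inr (Or.inl rfl))
  have hne' : (frank t).Nonempty := ⟨_, hpmem⟩
  have hpos' : ∀ x ∈ frank t, 1 ≤ x := by
    intro x hx
    rcases (hmem x).1 hx with h | h | ⟨h, -⟩
    · omega
    · omega
    · exact hpos x h
  have hmax' : smax (frank t) = smax t - 1 := by
    refine le_antisymm ?_ ?_
    · rcases (hmem _).1 (smax_mem hne') with h | h | ⟨h, h2⟩
      · omega
      · omega
      · have := le_smax h; omega
    · rcases Nat.lt_or_ge (rb t) (smax t) with h1 | h1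
      · exact le_smax ((hmem _).2 (Or.inr (Or.inr
          ⟨rb_run hne (Finset.mem_Icc.2 ⟨by omega, by omega⟩), by omega⟩)))
      · have hbM' : rb t = smax t := by omega
        exact le_smax ((hmem _).2 (Or.inr (Or.inl (by omega))))
  have hmin' : smin (frank t) = smax t + 1 - rb t := by
    refine le_antisymm (smin_le hpmem) ?_
    rcases (hmem _).1 (smin_mem hne') with h | h | ⟨h, -⟩
    · omega
    · omega
    · have := smin_le h; omega
  have hrbub' : rb (frank t) ≤ rb t - 1 := by
    refine rb_le hne' hqmem ?_
    intro x hx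
    rcases Finset.mem_Icc.1 hx with ⟨h1x, h2x⟩
    rw [hmax'] at h2x
    rcases Nat.lt_or_ge x (rb t) with h3 | h3
    · exact (hmem _).2 (Or.inr (Or.inl (by omega)))
    · exact (hmem _).2 (Or.inr (Or.inr
        ⟨rb_run hne (Finset.mem_Icc.2 ⟨by omega, by omega⟩), by omega⟩))
  have hc'' : smin (frank t) + rb (frank t) ≤ smax (frank t) + 1 := by
    rw [hmin', hmax']; omega
  have hexc' : ¬ isExc (frank t) := by
    intro hcon
    have hs1' : 1 ≤ smin (frank t) := hpos' _ (smin_mem hne')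
    rcases hcon with h | h
    · have h2 := congrArg smax h
      rw [hmax', smax_Icc (by omega), hmin'] at h2
      omega
    · have h2 := congrArg smax h
      have hle : smin (frank t) ≤ 2 * smin (frank t) - 2 := by
        by_contra hcon2
        have hemp : Finset.Icc (smin (frank t)) (2 * smin (frank t) - 2) = ∅ :=
          Finset.Icc_eq_empty (by omega)
        rw [hemp] at h
        exact (Finset.nonempty_iff_ne_empty.1 hne') h
      rw [hmax', smax_Icc hle, hmin'] at h2
      omega
  have hff : frank (frank t) = t := by
    rw [frank, if_pos hc'', hmax', hmin']
    have e1 : smax t - 1 + 1 = smax t := by omega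
    have e2 : smax t - 1 - (smax t + 1 - rb t) + 1 = rb t - 1 := by omega
    rw [e1, e2, hfr, Finset.erase_insert hnotin2, Finset.erase_insert hnotin1,
      Finset.insert_erase hMt]
  refine ⟨hsum, hne', hpos', hexc', hff, fun h => ?_⟩
  have hnM : smax t ∉ frank t := by
    intro hcon
    rcases (hmem _).1 hcon with h' | h' | ⟨-, h'⟩
    · omega
    · omega
    · exact h' rfl
  rw [h] at hnM
  exact hnM hMt

lemma frank_spec (t : Finset ℕ) (hne : t.Nonempty) (hpos : ∀ x ∈ t, 1 ≤ x)
    (hexc : ¬ isExc t) :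
    (frank t).sum id = t.sum id ∧ (frank t).Nonempty ∧ (∀ x ∈ frank t, 1 ≤ x) ∧
      ¬ isExc (frank t) ∧ frank (frank t) = t ∧ frank t ≠ t := by
  by_cases hc : smin t + rb t ≤ smax t + 1
  · exact frank_case1 t hne hpos hexc hc
  · exact frank_case2 t hne hpos hexc hc

lemma two_dvd_pent_num (k : ℤ) : 2 ∣ k * (3 * k - 1) := by
  rcases Int.even_or_odd k with ⟨j, hj⟩ | ⟨j, hj⟩
  · exact ⟨j * (3 * k - 1), by rw [hj]; ring⟩
  · exact ⟨k * (3 * j + 1), by rw [hj]; ring⟩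

lemma pent_eq_iff_s5 (k m : ℤ) : pent k = m ↔ k * (3 * k - 1) = 2 * m := by
  obtain ⟨c, hc⟩ := two_dvd_pent_num k
  unfold pent
  rw [hc, Int.mul_ediv_cancel_left _ (by norm_num)]
  omega

lemma pent_inj : Function.Injective pent := by
  intro a b h
  have h1 := (pent_eq_iff_s5 a (pent b)).1 h
  have h2 := (pent_eq_iff_s5 b (pent b)).1 rfl
  have h3 : (a - b) * (3 * a + 3 * b - 1) = 0 := by linear_combination h1 - h2
  rcases mul_eq_zero.1 h3 with h4 | h4
  · omega
  · omega

lemma exc_pent_left (t : Finset ℕ) (hne : t.Nonempty) (hpos : ∀ x ∈ t, 1 ≤ x)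
    (h : t = Finset.Icc (smin t) (2 * smin t - 1)) :
    1 ≤ smin t ∧ pent (smin t : ℤ) = ((t.sum id : ℕ) : ℤ) := by
  have hs1 : 1 ≤ smin t := hpos _ (smin_mem hne)
  refine ⟨hs1, ?_⟩
  have hsum : t.sum id = ∑ i ∈ Finset.Icc (smin t) (2 * smin t - 1), i := by
    rw [← h]; rfl
  have h1 := twice_sum_Icc (smin t) (2 * smin t - 1) (by omega)
  have e1 : smin t + (2 * smin t - 1) = 3 * smin t - 1 := by omega
  have e2 : 2 * smin t - 1 + 1 - smin t = smin t := by omega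
  rw [e1, e2] at h1
  obtain ⟨u, hu⟩ : ∃ u : ℕ, 3 * smin t = u + 1 := ⟨3 * smin t - 1, by omega⟩
  rw [show (3 * smin t - 1) = u by omega] at h1
  have h2 : (2 : ℤ) * ((∑ i ∈ Finset.Icc (smin t) (2 * smin t - 1), i : ℕ) : ℤ)
      = (u : ℤ) * (smin t : ℤ) := by exact_mod_cast h1
  have hu' : (u : ℤ) = 3 * (smin t : ℤ) - 1 := by
    have : (3 : ℤ) * smin t = u + 1 := by exact_mod_cast hu
    omega
  rw [pent_eq_iff_s5, hsum]
  linear_combination (-1 : ℤ) * h2 - (smin t : ℤ) * hu'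

lemma exc_pent_right (t : Finset ℕ) (hne : t.Nonempty) (hpos : ∀ x ∈ t, 1 ≤ x)
    (h : t = Finset.Icc (smin t) (2 * smin t - 2)) :
    2 ≤ smin t ∧ pent (1 - (smin t : ℤ)) = ((t.sum id : ℕ) : ℤ) := by
  have hs1 : 1 ≤ smin t := hpos _ (smin_mem hne)
  have hs2 : 2 ≤ smin t := by
    by_contra hcon
    have h1 : smin t = 1 := by omega
    rw [h1] at h
    have he : Finset.Icc 1 (2 * 1 - 2) = (∅ : Finset ℕ) := by decide
    rw [he] at h
    exact (Finset.nonempty_iff_ne_empty.1 hne) h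
  refine ⟨hs2, ?_⟩
  have hsum : t.sum id = ∑ i ∈ Finset.Icc (smin t) (2 * smin t - 2), i := by
    rw [← h]; rfl
  have h1 := twice_sum_Icc (smin t) (2 * smin t - 2) (by omega)
  have e1 : smin t + (2 * smin t - 2) = 3 * smin t - 2 := by omega
  have e2 : 2 * smin t - 2 + 1 - smin t = smin t - 1 := by omega
  rw [e1, e2] at h1
  obtain ⟨u, hu⟩ : ∃ u : ℕ, 3 * smin t = u + 2 := ⟨3 * smin t - 2, by omega⟩
  obtain ⟨v, hv⟩ : ∃ v : ℕ, smin t = v + 1 := ⟨smin t - 1, by omega⟩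
  rw [show (3 * smin t - 2) = u by omega, show (smin t - 1) = v by omega] at h1
  have h2 : (2 : ℤ) * ((∑ i ∈ Finset.Icc (smin t) (2 * smin t - 2), i : ℕ) : ℤ)
      = (u : ℤ) * (v : ℤ) := by exact_mod_cast h1
  have hu' : (u : ℤ) = 3 * (smin t : ℤ) - 2 := by
    have : (3 : ℤ) * smin t = u + 2 := by exact_mod_cast hu
    omega
  have hv' : (v : ℤ) = (smin t : ℤ) - 1 := by
    have : ((smin t : ℕ) : ℤ) = v + 1 := by exact_mod_cast hv
    omega
  rw [pent_eq_iff_s5, hsum]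
  linear_combination (-1 : ℤ) * h2 - (v : ℤ) * hu' - (3 * (smin t : ℤ) - 2) * hv'

lemma exc_eq_of_sum_eq (t u : Finset ℕ)
    (hne_t : t.Nonempty) (hpos_t : ∀ x ∈ t, 1 ≤ x) (hexc_t : isExc t)
    (hne_u : u.Nonempty) (hpos_u : ∀ x ∈ u, 1 ≤ x) (hexc_u : isExc u)
    (hsum : t.sum id = u.sum id) : t = u := by
  rcases hexc_t with h1 | h1 <;> rcases hexc_u with h2 | h2
  · obtain ⟨ha1, ha2⟩ := exc_pent_left t hne_t hpos_t h1
    obtain ⟨hb1, hb2⟩ := exc_pent_left u hne_u hpos_u h2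
    have hc : (smin t : ℤ) = (smin u : ℤ) := pent_inj (by rw [ha2, hb2, hsum])
    have hst : smin t = smin u := by exact_mod_cast hc
    rw [h1, h2, hst]
  · obtain ⟨ha1, ha2⟩ := exc_pent_left t hne_t hpos_t h1
    obtain ⟨hb1, hb2⟩ := exc_pent_right u hne_u hpos_u h2
    have hc : (smin t : ℤ) = 1 - (smin u : ℤ) := pent_inj (by rw [ha2, hb2, hsum])
    have hc1 : (1 : ℤ) ≤ (smin t : ℤ) := by exact_mod_cast ha1
    have hc2 : (2 : ℤ) ≤ (smin u : ℤ) := by exact_mod_cast hb1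
    omega
  · obtain ⟨ha1, ha2⟩ := exc_pent_right t hne_t hpos_t h1
    obtain ⟨hb1, hb2⟩ := exc_pent_left u hne_u hpos_u h2
    have hc : (1 - (smin t : ℤ)) = (smin u : ℤ) := pent_inj (by rw [ha2, hb2, hsum])
    have hc1 : (2 : ℤ) ≤ (smin t : ℤ) := by exact_mod_cast ha1
    have hc2 : (1 : ℤ) ≤ (smin u : ℤ) := by exact_mod_cast hb1
    omega
  · obtain ⟨ha1, ha2⟩ := exc_pent_right t hne_t hpos_t h1
    obtain ⟨hb1, hb2⟩ := exc_pent_right u hne_u hpos_u h2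
    have hc : 1 - (smin t : ℤ) = 1 - (smin u : ℤ) := pent_inj (by rw [ha2, hb2, hsum])
    have hst : smin t = smin u := by omega
    rw [h1, h2, hst]

lemma pent_to_exc (m : ℕ) (hm : 1 ≤ m) (k : ℤ) (hk : pent k = (m : ℤ)) :
    ∃ t : Finset ℕ, t.Nonempty ∧ (∀ x ∈ t, 1 ≤ x) ∧ t.sum id = m ∧ isExc t := by
  have hk2 : k * (3 * k - 1) = 2 * m := (pent_eq_iff_s5 k m).1 hk
  rcases lt_trichotomy k 0 with hneg | hzero | hposk
  · obtain ⟨j, hj1, hj2⟩ : ∃ j : ℕ, k = -(j : ℤ) ∧ 1 ≤ j := by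
      refine ⟨(-k).toNat, ?_, ?_⟩ <;> omega
    refine ⟨Finset.Icc (j + 1) (2 * j), ?_, ?_, ?_, ?_⟩
    · exact ⟨j + 1, Finset.mem_Icc.2 ⟨le_refl _, by omega⟩⟩
    · intro x hx; have := (Finset.mem_Icc.1 hx).1; omega
    · have h1 := twice_sum_Icc (j + 1) (2 * j) (by omega)
      have e1 : j + 1 + 2 * j = 3 * j + 1 := by omega
      have e2 : 2 * j + 1 - (j + 1) = j := by omega
      rw [e1, e2] at h1
      have h2 : (j : ℤ) * (3 * j + 1) = 2 * m := by
        rw [← hk2, hj1]; ring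
      have h3 : (2 : ℤ) * ((∑ i ∈ Finset.Icc (j + 1) (2 * j), i : ℕ) : ℤ)
          = (3 * (j : ℤ) + 1) * (j : ℤ) := by exact_mod_cast h1
      have h4 : (2 : ℤ) * ((∑ i ∈ Finset.Icc (j + 1) (2 * j), i : ℕ) : ℤ) = 2 * m := by
        linear_combination h3 + h2
      have h5 := mul_left_cancel₀ (show (2:ℤ) ≠ 0 by norm_num) h4
      exact_mod_cast h5
    · right
      have hmin : smin (Finset.Icc (j + 1) (2 * j)) = j + 1 := smin_Icc (by omega)
      rw [hmin, show 2 * (j + 1) - 2 = 2 * j by omega]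
  · exfalso; rw [hzero] at hk2; omega
  · obtain ⟨j, hj1, hj2⟩ : ∃ j : ℕ, k = (j : ℤ) ∧ 1 ≤ j := by
      refine ⟨k.toNat, ?_, ?_⟩ <;> omega
    refine ⟨Finset.Icc j (2 * j - 1), ?_, ?_, ?_, ?_⟩
    · exact ⟨j, Finset.mem_Icc.2 ⟨le_refl _, by omega⟩⟩
    · intro x hx; have := (Finset.mem_Icc.1 hx).1; omega
    · have h1 := twice_sum_Icc j (2 * j - 1) (by omega)
      have e1 : j + (2 * j - 1) = 3 * j - 1 := by omega
      have e2 : 2 * j - 1 + 1 - j = j := by omega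
      rw [e1, e2] at h1
      obtain ⟨u, hu⟩ : ∃ u : ℕ, 3 * j = u + 1 := ⟨3 * j - 1, by omega⟩
      rw [show (3 * j - 1) = u by omega] at h1
      have h2 : (j : ℤ) * (3 * j - 1) = 2 * m := by rw [← hk2, hj1]
      have h3 : (2 : ℤ) * ((∑ i ∈ Finset.Icc j (2 * j - 1), i : ℕ) : ℤ)
          = (u : ℤ) * (j : ℤ) := by exact_mod_cast h1
      have hu' : (u : ℤ) = 3 * (j : ℤ) - 1 := by
        have : (3 : ℤ) * j = u + 1 := by exact_mod_cast hu
        omega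
      have h4 : (2 : ℤ) * ((∑ i ∈ Finset.Icc j (2 * j - 1), i : ℕ) : ℤ) = 2 * m := by
        linear_combination h3 + (j : ℤ) * hu' + h2
      have h5 := mul_left_cancel₀ (show (2:ℤ) ≠ 0 by norm_num) h4
      exact_mod_cast h5
    · left
      have hmin : smin (Finset.Icc j (2 * j - 1)) = j := smin_Icc (by omega)
      rw [hmin]

lemma add_self_ps (f : PowerSeries (ZMod 2)) : f + f = 0 := by
  apply PowerSeries.ext
  intro n
  rw [map_add, map_zero, CharTwo.add_self_eq_zero]

lemma sub_eq_add_ps (a b : PowerSeries (ZMod 2)) : a - b = a + b := by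
  rw [sub_eq_add_neg, neg_eq_of_add_eq_zero_right (add_self_ps b)]

lemma coeff_fZ2_card (m : ℕ) :
    PowerSeries.coeff m (fZ2 1) =
      ((((Finset.Icc 1 (m+1)).powerset).filter (fun t => t.sum id = m)).card : ZMod 2) := by
  rw [fZ2, PowerSeries.coeff_mk]
  have h1 : ∀ i ∈ Finset.Icc 1 (m+1), (1 : PowerSeries (ZMod 2)) - PowerSeries.X ^ (1 * i)
      = PowerSeries.X ^ i + 1 := by
    intro i _
    rw [one_mul, sub_eq_add_ps, add_comm]
  rw [Finset.prod_congr rfl h1, Finset.prod_add]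
  simp only [Finset.prod_const_one, mul_one, Finset.prod_pow_eq_pow_sum]
  rw [map_sum]
  have h2 : ∀ t ∈ (Finset.Icc 1 (m+1)).powerset,
      (PowerSeries.coeff m) (∏ i ∈ t, PowerSeries.X ^ i)
        = (if t.sum id = m then (1 : ZMod 2) else 0) := by
    intro t _
    rw [Finset.prod_pow_eq_pow_sum t (fun i => i) PowerSeries.X, PowerSeries.coeff_X_pow]
    simp only [Function.id_def, eq_comm]
  rw [Finset.sum_congr rfl h2, Finset.sum_boole]

set_option maxHeartbeats 2000000 in
lemma coeff_fZ2_pent (m : ℕ) :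
    PowerSeries.coeff m (fZ2 1) = if ∃ k : ℤ, pent k = (m : ℤ) then 1 else 0 := by
  rw [coeff_fZ2_card]
  rcases Nat.eq_zero_or_pos m with hm | hm
  · subst hm
    have hset : ((Finset.Icc 1 (0+1)).powerset).filter (fun t => t.sum id = 0)
        = {(∅ : Finset ℕ)} := by
      ext t
      simp only [Finset.mem_filter, Finset.mem_powerset, Finset.mem_singleton]
      constructor
      · rintro ⟨hsub, hsum⟩
        by_contra hne
        obtain ⟨x, hx⟩ := Finset.nonempty_iff_ne_empty.2 hne
        have h1 : 1 ≤ x := (Finset.mem_Icc.1 (hsub hx)).1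
        have h2 : x ≤ t.sum id := Finset.single_le_sum (f := id) (fun i _ => Nat.zero_le i) hx
        omega
      · rintro rfl
        exact ⟨Finset.empty_subset _, rfl⟩
    rw [hset, if_pos ⟨0, by norm_num [pent]⟩]
    simp
  · set S := ((Finset.Icc 1 (m+1)).powerset).filter (fun t => t.sum id = m) with hS
    have hmemS : ∀ t, t ∈ S ↔ (t ⊆ Finset.Icc 1 (m+1) ∧ t.sum id = m) := by
      intro t; rw [hS]; simp [Finset.mem_filter, Finset.mem_powerset]
    have hfacts : ∀ t ∈ S, t.Nonempty ∧ (∀ x ∈ t, 1 ≤ x) := by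
      intro t ht
      rcases (hmemS t).1 ht with ⟨hsub, hsum⟩
      constructor
      · rcases Finset.eq_empty_or_nonempty t with rfl | h
        · simp at hsum; omega
        · exact h
      · intro x hx; exact (Finset.mem_Icc.1 (hsub hx)).1
    have hcard : S.card = (S.filter isExc).card + (S.filter (fun t => ¬ isExc t)).card := by
      conv_lhs => rw [← Finset.filter_union_filter_not_eq isExc S]
      rw [Finset.card_union_of_disjoint (Finset.disjoint_filter_filter_not S S isExc)]
    rw [hcard]
    push_cast
    have hzero : (((S.filter (fun t => ¬ isExc t)).card : ZMod 2)) = 0 := by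
      have hc : ((S.filter (fun t => ¬ isExc t)).card : ZMod 2)
          = ∑ _t ∈ S.filter (fun t => ¬ isExc t), (1 : ZMod 2) := by simp
      rw [hc]
      have hmem2 : ∀ t, t ∈ S.filter (fun t => ¬ isExc t) ↔
          (t ∈ S ∧ ¬ isExc t) := fun t => Finset.mem_filter
      refine Finset.sum_involution (fun t _ => frank t) (fun a _ => by decide) ?_ ?_ ?_
      · intro a ha _
        obtain ⟨haS, haExc⟩ := (hmem2 a).1 ha
        obtain ⟨hne, hpos⟩ := hfacts a haS
        exact (frank_spec a hne hpos haExc).2.2.2.2.2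
      · intro a ha
        obtain ⟨haS, haExc⟩ := (hmem2 a).1 ha
        obtain ⟨hne, hpos⟩ := hfacts a haS
        obtain ⟨hsum, hne', hpos', hexc', hff, hneq⟩ := frank_spec a hne hpos haExc
        refine (hmem2 _).2 ⟨(hmemS _).2 ⟨?_, by rw [hsum, ((hmemS a).1 haS).2]⟩, hexc'⟩
        intro x hx
        have h2 : x ≤ (frank a).sum id :=
          Finset.single_le_sum (f := id) (fun i _ => Nat.zero_le i) hx
        rw [hsum, ((hmemS a).1 haS).2] at h2
        exact Finset.mem_Icc.2 ⟨hpos' x hx, by omega⟩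
      · intro a ha
        obtain ⟨haS, haExc⟩ := (hmem2 a).1 ha
        obtain ⟨hne, hpos⟩ := hfacts a haS
        exact (frank_spec a hne hpos haExc).2.2.2.2.1
    rw [hzero, add_zero]
    by_cases hp : ∃ k : ℤ, pent k = (m : ℤ)
    · rw [if_pos hp]
      obtain ⟨k, hk⟩ := hp
      obtain ⟨t₀, ht1, ht2, ht3, ht4⟩ := pent_to_exc m hm k hk
      have hsingle : S.filter isExc = {t₀} := by
        apply Finset.eq_singleton_iff_unique_mem.2
        constructor
        · refine Finset.mem_filter.2 ⟨(hmemS t₀).2 ⟨?_, ht3⟩, ht4⟩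
          intro x hx
          have h2 : x ≤ t₀.sum id :=
            Finset.single_le_sum (f := id) (fun i _ => Nat.zero_le i) hx
          exact Finset.mem_Icc.2 ⟨ht2 x hx, by omega⟩
        · intro u hu
          rcases Finset.mem_filter.1 hu with ⟨huS, huExc⟩
          obtain ⟨hun, hup⟩ := hfacts u huS
          exact exc_eq_of_sum_eq u t₀ hun hup huExc ht1 ht2 ht4
            (by rw [((hmemS u).1 huS).2, ht3])
      rw [hsingle]
      simp
    · rw [if_neg hp]
      have hempty : S.filter isExc = ∅ := by
        rw [Finset.eq_empty_iff_forall_notMem]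
        intro t ht
        rcases Finset.mem_filter.1 ht with ⟨htS, htExc⟩
        obtain ⟨hne, hpos⟩ := hfacts t htS
        apply hp
        have hsum : t.sum id = m := ((hmemS t).1 htS).2
        rcases htExc with h | h
        · exact ⟨(smin t : ℤ), by rw [(exc_pent_left t hne hpos h).2, hsum]⟩
        · exact ⟨1 - (smin t : ℤ), by rw [(exc_pent_right t hne hpos h).2, hsum]⟩
      rw [hempty]
      simp

lemma zmod2_one_iff (c : ℕ) : (c : ZMod 2) = 1 ↔ Odd c := by
  rcases Nat.even_or_odd c with ⟨k, hk⟩ | ⟨k, hk⟩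
  · subst hk
    constructor
    · intro h
      exfalso
      push_cast at h
      rw [CharTwo.add_self_eq_zero] at h
      exact absurd h (by decide)
    · intro h
      exact absurd h (by simp [Nat.odd_iff]; omega)
  · subst hk
    constructor
    · intro _
      exact ⟨k, by omega⟩
    · intro _
      push_cast
      rw [show (2 : ZMod 2) = 0 by decide, zero_mul, zero_add]

/-- The coefficient of `q^n` in `f_1/(1-q)` is odd (i.e. equals `1` over `ℤ/2`)
iff the number of generalized pentagonal numbers `≤ n` is odd. -/
theorem coeff_fZ2_mul_geom_eq_one_iff (n : ℕ) :
    PowerSeries.coeff n (fZ2 1 * geomZ2) = 1 ↔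
      Odd ((Finset.range (n + 1)).filter fun m => ∃ k : ℤ, pent k = (m : ℤ)).card := by
  have hgeom : ∀ j : ℕ, PowerSeries.coeff j geomZ2 = 1 := fun j => by
    rw [geomZ2, PowerSeries.coeff_mk]
  rw [PowerSeries.coeff_mul, Finset.Nat.sum_antidiagonal_eq_sum_range_succ_mk]
  simp only [hgeom, mul_one]
  have h2 : ∀ k ∈ Finset.range (n+1), PowerSeries.coeff k (fZ2 1)
      = (if ∃ j : ℤ, pent j = (k : ℤ) then (1 : ZMod 2) else 0) := fun k _ => coeff_fZ2_pent k
  rw [Finset.sum_congr rfl h2, Finset.sum_boole, zmod2_one_iff]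
  have hcoe : (do let a ← Finset.range (n+1); pure ((a : ℤ)) : Finset ℤ)
      = (Finset.range (n+1)).image (fun a : ℕ => (a : ℤ)) := by
    ext x; simp [Bind.bind, Finset.mem_sup]
  rw [hcoe, Finset.filter_image, Finset.card_image_of_injective _ (fun a b h => by omega)]
end

section
/- The number of odd coefficients of f_1/(1-q) in degrees n ≤ x is asymptotic to 2x/3 as x → ∞. -/
open scoped Classical

/-- `f a = ∏_{i ≥ 1} (1 - q^{a i})` as a formal power series over `ℤ`. -/
noncomputable def fEta (a : ℕ) : PowerSeries ℤ :=
  PowerSeries.mk fun n =>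
    PowerSeries.coeff n
      (∏ i ∈ Finset.Icc 1 (n + 1), (1 - (PowerSeries.X : PowerSeries ℤ) ^ (a * i)))

/-- `1/(1-q) = ∑_{j ≥ 0} q^j` over `ℤ`. -/
noncomputable def geomZ : PowerSeries ℤ := PowerSeries.mk fun _ => 1

/-- Number of `n ≤ x` in which the coefficient of `q^n` in `A` is odd. -/
noncomputable def oddCount (A : PowerSeries ℤ) (x : ℕ) : ℕ :=
  ((Finset.range (x + 1)).filter fun n => Odd (PowerSeries.coeff n A)).card

open PowerSeries Finset

-- pentagonal numbers
def gp : ℕ → ℕ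
  | 0 => 0
  | k+1 => gp k + (3*k+2)

def gm : ℕ → ℕ
  | 0 => 0
  | k+1 => gm k + (3*k+1)

def tri : ℕ → ℕ
  | 0 => 0
  | k+1 => tri k + (k+1)

def ee (i n : ℕ) : ℕ := tri i + n*i

lemma gp_eq_gm_add (k : ℕ) : gp k = gm k + k := by
  induction k with
  | zero => rfl
  | succ k ih => simp only [gp, gm, ih]; omega

lemma gm_succ_eq (k : ℕ) : gm (k+1) = gp k + (2*k+1) := by
  induction k with
  | zero => rfl
  | succ k ih => simp only [gp, gm] at *; omega

lemma gp_eq_tri (k : ℕ) : gp k = tri k + k*k := by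
  induction k with
  | zero => rfl
  | succ k ih =>
    have h : (k+1)*(k+1) = k*k + 2*k + 1 := by ring
    simp only [gp, tri, ih, h]; omega

lemma gm_succ_eq_tri (n : ℕ) : gm (n+1) = tri n + n*n + (2*n+1) := by
  rw [gm_succ_eq, gp_eq_tri]

lemma gp_strictMono : StrictMono gp :=
  strictMono_nat_of_lt_succ (fun k => by simp only [gp]; omega)

lemma gm_strictMono : StrictMono gm :=
  strictMono_nat_of_lt_succ (fun k => by simp only [gm]; omega)

lemma self_le_gp (k : ℕ) : k ≤ gp k := by
  induction k with
  | zero => simp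
  | succ k ih => simp [gp]; omega

lemma gp_ne_gm {j j' : ℕ} (h : gp j = gm j') (hj' : 1 ≤ j') : False := by
  rcases lt_trichotomy j j' with hlt | rfl | hgt
  · -- j < j' : gm j' ≥ gm (j+1) = gp j + 2j+1 > gp j
    have h1 : gm (j+1) ≤ gm j' := gm_strictMono.le_iff_le.2 hlt
    rw [gm_succ_eq] at h1; omega
  · have := gp_eq_gm_add j; omega
  · have h1 : gm j' ≤ gm j := gm_strictMono.le_iff_le.2 (le_of_lt hgt)
    have h2 := gp_eq_gm_add j
    -- gp j = gm j + j = gm j', so gm j' ≥ gm j, and gm j' = gm j + j with j > j' means j = 0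
    have h3 : gm j < gm (j'+1) ∨ j' + 1 ≤ j := by omega
    have h4 : gm (j'+1) ≤ gm j := gm_strictMono.le_iff_le.2 hgt
    rw [gm_succ_eq] at h4
    have h5 : gp j' < gp j := gp_strictMono hgt
    omega

-- the partial products
noncomputable def PP (i n : ℕ) : PowerSeries ℤ :=
  ∏ k ∈ Finset.Icc (i+1) n, (1 - (PowerSeries.X : PowerSeries ℤ) ^ k)

noncomputable def Lsum (n : ℕ) : PowerSeries ℤ :=
  ∑ i ∈ range (n+1), (-1:PowerSeries ℤ)^i * (X^(ee i n) * PP i n)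

noncomputable def Spent (n : ℕ) : PowerSeries ℤ :=
  (∑ j ∈ range (n+1), (-1:PowerSeries ℤ)^j * X^(gp j))
    + ∑ j ∈ range n, (-1:PowerSeries ℤ)^(j+1) * X^(gm (j+1))

lemma PP_self (n : ℕ) : PP n n = 1 := by
  simp [PP, Finset.Icc_eq_empty_of_lt (Nat.lt_succ_self n)]

lemma one_sub_X_pow_mul_PP {j n : ℕ} (h : j + 1 ≤ n) :
    (1 - (X : PowerSeries ℤ)^(j+1)) * PP (j+1) n = PP j n := by
  rw [PP, PP, ← Finset.insert_Icc_add_one_left_eq_Icc h,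
    Finset.prod_insert (by simp)]

lemma ee_succ (j n : ℕ) : ee (j+1) n = ee j n + j + (n+1) := by
  simp only [ee, tri]; ring

theorem shanks (n : ℕ) : Lsum n = Spent n := by
  induction n with
  | zero => simp [Lsum, Spent, ee, tri, PP, gp]
  | succ n ih =>
    set q : PowerSeries ℤ := X with hq
    set g : ℕ → PowerSeries ℤ := fun i => (-1:PowerSeries ℤ)^i * (q^(ee i n + i) * PP i n) with hg
    set h : ℕ → PowerSeries ℤ := fun i => (-1:PowerSeries ℤ)^i * (q^(ee i n + i + (n+1)) * PP i n) with hh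
    have step1 : Lsum (n+1) = (∑ i ∈ range (n+1), (g i - h i)) + (-1:PowerSeries ℤ)^(n+1) * q^(gp (n+1)) := by
      rw [Lsum, Finset.sum_range_succ]
      congr 1
      · apply Finset.sum_congr rfl
        intro i hi
        have hi' : i ≤ n := Nat.lt_succ_iff.mp (Finset.mem_range.mp hi)
        have hPP : PP i (n+1) = PP i n * (1 - q^(n+1)) := by
          rw [PP, PP, Finset.prod_Icc_succ_top (by omega)]
        have hee : ee i (n+1) = ee i n + i := by simp only [ee]; ring
        rw [hPP, hee, hg, hh]
        simp only [pow_add]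
        ring
      · have hee : ee (n+1) (n+1) = gp (n+1) := by
          rw [gp_eq_tri]; simp only [ee]
        rw [PP_self, hee]; rw [mul_one]
    have step2 : ∀ i ∈ range (n+1),
        g i = (-1:PowerSeries ℤ)^i * (q^(ee i n) * PP i n)
          + (match i with | 0 => 0 | j+1 => h j) := by
      intro i hi
      match i with
      | 0 => simp [hg]
      | j+1 =>
        have hj : j + 1 ≤ n := Nat.lt_succ_iff.mp (Finset.mem_range.mp hi)
        have hPPj : PP j n = (1 - q^(j+1)) * PP (j+1) n := (one_sub_X_pow_mul_PP hj).symm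
        have heej : ee j n + j + (n+1) = ee (j+1) n := (ee_succ j n).symm
        simp only [hg, hh, heej, hPPj]
        simp only [pow_add, pow_succ]
        ring
    have step3 : ∑ i ∈ range (n+1), g i = Lsum n + ∑ j ∈ range n, h j := by
      rw [Finset.sum_congr rfl step2, Finset.sum_add_distrib, Lsum]
      congr 1
      rw [Finset.sum_range_succ']
      simp
    have step4 : h n = (-1:PowerSeries ℤ)^n * q^(gm (n+1)) := by
      have he : ee n n + n + (n+1) = gm (n+1) := by
        rw [gm_succ_eq_tri]; simp only [ee]; ring
      simp only [hh]
      rw [PP_self, he, mul_one]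
    have hSp : Spent (n+1) = Spent n + ((-1:PowerSeries ℤ)^(n+1) * X^(gp (n+1)) + (-1:PowerSeries ℤ)^(n+1) * X^(gm (n+1))) := by
      simp only [Spent, Finset.sum_range_succ]
      ring
    rw [step1, Finset.sum_sub_distrib, step3, Finset.sum_range_succ, step4, hSp, ih]
    simp only [pow_succ, hq]
    ring

lemma self_le_gm (k : ℕ) : k ≤ gm k := by
  induction k with
  | zero => omega
  | succ k ih => simp only [gm]; omega

lemma one_le_tri (i : ℕ) : 1 ≤ tri (i+1) := by
  induction i with
  | zero => simp [tri]
  | succ i ih => simp only [tri] at *; omega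

lemma coeff_term_zero {N e : ℕ} (hN : N < e) (i : ℕ) (P : PowerSeries ℤ) :
    PowerSeries.coeff N ((-1:PowerSeries ℤ)^i * (X^e * P)) = 0 := by
  have h0 : PowerSeries.coeff N ((X:PowerSeries ℤ)^e * P) = 0 := by
    rw [PowerSeries.coeff_X_pow_mul', if_neg (by omega)]
  rcases neg_one_pow_eq_or (PowerSeries ℤ) i with h | h
  · rw [h, one_mul, h0]
  · rw [h, neg_one_mul, map_neg, h0, neg_zero]

lemma coeff_PP0 {N n : ℕ} (hN : N ≤ n) :
    PowerSeries.coeff N (PP 0 n) = PowerSeries.coeff N (Spent n) := by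
  have h1 : PowerSeries.coeff N (Lsum n) = PowerSeries.coeff N (PP 0 n) := by
    rw [Lsum, Finset.sum_range_succ', map_add, map_sum]
    have hz : ∀ i ∈ range n,
        PowerSeries.coeff N ((-1:PowerSeries ℤ)^(i+1) * (X^(ee (i+1) n) * PP (i+1) n)) = 0 := by
      intro i hi
      apply coeff_term_zero
      have h1 := one_le_tri i
      have h2 : n * (i+1) ≥ n := Nat.le_mul_of_pos_right n (by omega)
      simp only [ee]
      omega
    rw [Finset.sum_eq_zero hz, zero_add]
    have : ee 0 n = 0 := by simp [ee, tri]
    rw [this, pow_zero, pow_zero, one_mul, one_mul]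
  rw [← h1, shanks]

lemma coeff_sign_pow (N g j : ℕ) :
    PowerSeries.coeff N ((-1:PowerSeries ℤ)^j * X^(g)) =
      (-1:ℤ)^j * (if N = g then 1 else 0) := by
  have : ((-1:PowerSeries ℤ)^j) = PowerSeries.C ((-1:ℤ)^j) := by
    rw [map_pow, map_neg, map_one]
  rw [this, PowerSeries.coeff_C_mul_X_pow]
  split_ifs <;> ring

lemma coeff_Spent (N n : ℕ) :
    PowerSeries.coeff N (Spent n) =
      (∑ j ∈ range (n+1), (-1:ℤ)^j * (if N = gp j then 1 else 0))
      + ∑ j ∈ range n, (-1:ℤ)^(j+1) * (if N = gm (j+1) then 1 else 0) := by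
  rw [Spent, map_add, map_sum, map_sum]
  congr 1 <;> exact Finset.sum_congr rfl (fun j _ => coeff_sign_pow _ _ _)

def isPent (N : ℕ) : Prop := ∃ k, N = gp k ∨ N = gm (k+1)

theorem odd_coeff_PP0 {N n : ℕ} (hN : N ≤ n) :
    Odd (PowerSeries.coeff N (PP 0 n)) ↔ isPent N := by
  rw [coeff_PP0 hN, coeff_Spent]
  by_cases h1 : ∃ k, N = gp k
  · obtain ⟨k, hk⟩ := h1
    have hkmem : k ∈ range (n+1) := by
      have := self_le_gp k; exact Finset.mem_range.mpr (by omega)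
    have hA : (∑ j ∈ range (n+1), (-1:ℤ)^j * (if N = gp j then 1 else 0)) = (-1)^k := by
      rw [Finset.sum_eq_single k]
      · rw [if_pos hk, mul_one]
      · intro j _ hj
        rw [if_neg, mul_zero]
        intro hNj
        exact hj (gp_strictMono.injective (hk ▸ hNj : gp k = gp j)).symm
      · intro hk'; exact absurd hkmem hk'
    have hB : (∑ j ∈ range n, (-1:ℤ)^(j+1) * (if N = gm (j+1) then 1 else 0)) = 0 := by
      apply Finset.sum_eq_zero
      intro j _
      rw [if_neg, mul_zero]
      intro hNj
      exact gp_ne_gm (hk ▸ hNj ▸ rfl : gp k = gm (j+1)) (by omega)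
    rw [hA, hB, add_zero]
    constructor
    · intro _; exact ⟨k, Or.inl hk⟩
    · intro _
      rcases neg_one_pow_eq_or ℤ k with h | h <;> rw [h] <;> decide
  · by_cases h2 : ∃ k, N = gm (k+1)
    · obtain ⟨k, hk⟩ := h2
      have hkmem : k ∈ range n := by
        have := self_le_gm (k+1)
        exact Finset.mem_range.mpr (by omega)
      have hA : (∑ j ∈ range (n+1), (-1:ℤ)^j * (if N = gp j then 1 else 0)) = 0 := by
        apply Finset.sum_eq_zero
        intro j _
        rw [if_neg, mul_zero]
        intro hNj
        exact h1 ⟨j, hNj⟩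
      have hB : (∑ j ∈ range n, (-1:ℤ)^(j+1) * (if N = gm (j+1) then 1 else 0)) = (-1)^(k+1) := by
        rw [Finset.sum_eq_single k]
        · rw [if_pos hk, mul_one]
        · intro j _ hj
          rw [if_neg, mul_zero]
          intro hNj
          have := gm_strictMono.injective (hk ▸ hNj : gm (k+1) = gm (j+1))
          omega
        · intro hk'; exact absurd hkmem hk'
      rw [hA, hB, zero_add]
      constructor
      · intro _; exact ⟨k, Or.inr hk⟩
      · intro _
        rcases neg_one_pow_eq_or ℤ (k+1) with h | h <;> rw [h] <;> decide
    · have hA : (∑ j ∈ range (n+1), (-1:ℤ)^j * (if N = gp j then 1 else 0)) = 0 :=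
        Finset.sum_eq_zero fun j _ => by
          rw [if_neg (fun hNj => h1 ⟨j, hNj⟩), mul_zero]
      have hB : (∑ j ∈ range n, (-1:ℤ)^(j+1) * (if N = gm (j+1) then 1 else 0)) = 0 :=
        Finset.sum_eq_zero fun j _ => by
          rw [if_neg (fun hNj => h2 ⟨j, hNj⟩), mul_zero]
      rw [hA, hB, add_zero]
      constructor
      · intro h; exact absurd h (by decide)
      · rintro ⟨k, hk | hk⟩
        · exact absurd ⟨k, hk⟩ h1
        · exact absurd ⟨k, hk⟩ h2

lemma coeff_fEta_one (N : ℕ) :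
    PowerSeries.coeff N (fEta 1) = PowerSeries.coeff N (PP 0 (N+1)) := by
  rw [fEta, PowerSeries.coeff_mk, PP]
  simp only [one_mul]

lemma odd_coeff_fEta_one (N : ℕ) : Odd (PowerSeries.coeff N (fEta 1)) ↔ isPent N := by
  rw [coeff_fEta_one]
  exact odd_coeff_PP0 (by omega)

lemma coeff_mul_geom (N : ℕ) :
    PowerSeries.coeff N (fEta 1 * geomZ) =
      ∑ m ∈ range (N+1), PowerSeries.coeff m (fEta 1) := by
  rw [PowerSeries.coeff_mul, Finset.Nat.sum_antidiagonal_eq_sum_range_succ_mk]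
  apply Finset.sum_congr rfl
  intro m _
  rw [geomZ, PowerSeries.coeff_mk, mul_one]

lemma int_odd_sum (s : Finset ℕ) (f : ℕ → ℤ) :
    Odd (∑ i ∈ s, f i) ↔ Odd ((s.filter fun i => Odd (f i)).card) := by
  induction s using Finset.induction with
  | empty => simp
  | @insert a s ha ih =>
    rw [Finset.sum_insert ha, Finset.filter_insert]
    split_ifs with hf
    · rw [Finset.card_insert_of_notMem (fun hmem => ha (Finset.mem_of_mem_filter a hmem))]
      rw [Int.odd_add, Nat.odd_add_one, Nat.not_odd_iff_even, ← Int.not_odd_iff_even, ih,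
        ← Nat.not_odd_iff_even]
      tauto
    · rw [Int.odd_add', ih]
      have hfa : Even (f a) := Int.not_odd_iff_even.mp hf
      tauto

lemma two_le_gp {k : ℕ} (hk : 1 ≤ k) : 2*k ≤ gp k := by
  induction k with
  | zero => omega
  | succ k ih =>
    rcases Nat.eq_zero_or_pos k with rfl | hpos
    · simp [gp]
    · have := ih hpos; simp only [gp]; omega

/-- the greatest `k` with `gp k ≤ N` -/
def Kof (N : ℕ) : ℕ := Nat.findGreatest (fun k => gp k ≤ N) N

lemma gp_Kof_le (N : ℕ) : gp (Kof N) ≤ N :=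
  Nat.findGreatest_spec (P := fun k => gp k ≤ N) (Nat.zero_le N) (by simp [gp])

lemma le_Kof {k N : ℕ} (h : gp k ≤ N) : k ≤ Kof N :=
  Nat.le_findGreatest (le_trans (self_le_gp k) h) h

lemma lt_gp_Kof_succ (N : ℕ) : N < gp (Kof N + 1) := by
  by_contra h
  push_neg at h
  have := le_Kof h
  omega

/-- the greatest `k` with `gm k ≤ N` -/
def Lof (N : ℕ) : ℕ := Nat.findGreatest (fun k => gm k ≤ N) N

lemma gm_Lof_le (N : ℕ) : gm (Lof N) ≤ N :=
  Nat.findGreatest_spec (P := fun k => gm k ≤ N) (Nat.zero_le N) (by simp [gm])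

lemma le_Lof {k N : ℕ} (h : gm k ≤ N) : k ≤ Lof N :=
  Nat.le_findGreatest (le_trans (self_le_gm k) h) h

lemma lt_gm_Lof_succ (N : ℕ) : N < gm (Lof N + 1) := by
  by_contra h
  push_neg at h
  have := le_Lof h
  omega

lemma pent_filter_eq (N : ℕ) :
    (range (N+1)).filter isPent =
      ((range (Kof N + 1)).image gp) ∪ ((range (Lof N)).image (fun j => gm (j+1))) := by
  ext n
  simp only [Finset.mem_filter, Finset.mem_range, Finset.mem_union, Finset.mem_image]
  constructor
  · rintro ⟨hn, k, hk | hk⟩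
    · exact Or.inl ⟨k, by have := le_Kof (show gp k ≤ N by omega); omega, hk.symm⟩
    · exact Or.inr ⟨k, by have := le_Lof (show gm (k+1) ≤ N by omega); omega, hk.symm⟩
  · rintro (⟨k, hk, rfl⟩ | ⟨k, hk, rfl⟩)
    · refine ⟨?_, k, Or.inl rfl⟩
      have h1 : gp k ≤ gp (Kof N) := gp_strictMono.le_iff_le.2 (by omega)
      have := gp_Kof_le N; omega
    · refine ⟨?_, k, Or.inr rfl⟩
      have h1 : gm (k+1) ≤ gm (Lof N) := gm_strictMono.le_iff_le.2 (by omega)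
      have := gm_Lof_le N; omega

lemma pent_card (N : ℕ) :
    ((range (N+1)).filter isPent).card = Kof N + 1 + Lof N := by
  have hdisj : Disjoint ((range (Kof N + 1)).image gp)
      ((range (Lof N)).image (fun j => gm (j+1))) := by
    rw [Finset.disjoint_left]
    intro n hn hn'
    rw [Finset.mem_image] at hn hn'
    obtain ⟨k, _, rfl⟩ := hn
    obtain ⟨j, _, hj⟩ := hn'
    exact gp_ne_gm hj.symm (by omega)
  rw [pent_filter_eq, Finset.card_union_of_disjoint hdisj,
    Finset.card_image_of_injective _ gp_strictMono.injective,
    Finset.card_image_of_injective _ (fun a b hab => by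
      have := gm_strictMono.injective hab; omega),
    Finset.card_range, Finset.card_range]

lemma Lof_eq_or (N : ℕ) : Lof N = Kof N ∨ Lof N = Kof N + 1 := by
  have h1 : Kof N ≤ Lof N := by
    apply le_Lof
    calc gm (Kof N) ≤ gp (Kof N) := by have := gp_eq_gm_add (Kof N); omega
    _ ≤ N := gp_Kof_le N
  have h2 : Lof N ≤ Kof N + 1 := by
    by_contra h
    push_neg at h
    have h3 : gm (Kof N + 1 + 1) ≤ gm (Lof N) := gm_strictMono.le_iff_le.2 (by omega)
    have h4 := gm_Lof_le N
    have h5 := lt_gp_Kof_succ N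
    have h6 := gm_succ_eq (Kof N + 1)
    omega
  omega

lemma odd_pent_card_iff (N : ℕ) :
    Odd (((range (N+1)).filter isPent).card) ↔ ∃ k, gp k ≤ N ∧ N < gm (k+1) := by
  rw [pent_card]
  constructor
  · intro h
    refine ⟨Kof N, gp_Kof_le N, ?_⟩
    rcases Lof_eq_or N with hL | hL
    · rw [← hL]; exact lt_gm_Lof_succ N
    · exfalso; rw [hL] at h; rcases h with ⟨t, ht⟩; omega
  · rintro ⟨k, hk1, hk2⟩
    have hkK : k ≤ Kof N := le_Kof hk1
    have hKk : Kof N ≤ k := by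
      by_contra h
      push_neg at h
      have h1 : gp (k+1) ≤ gp (Kof N) := gp_strictMono.le_iff_le.2 (by omega)
      have h2 := gp_Kof_le N
      have h3 := gp_eq_gm_add (k+1)
      omega
    have hkeq : k = Kof N := by omega
    have hL : Lof N = Kof N := by
      have h1 : Lof N ≤ k := by
        by_contra h
        push_neg at h
        have hx : gm (k+1) ≤ gm (Lof N) := gm_strictMono.le_iff_le.2 (by omega)
        have hy := gm_Lof_le N
        omega
      have h2 : Kof N ≤ Lof N := by
        apply le_Lof
        calc gm (Kof N) ≤ gp (Kof N) := by have := gp_eq_gm_add (Kof N); omega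
        _ ≤ N := gp_Kof_le N
      omega
    rw [hL]
    exact ⟨Kof N, by omega⟩

theorem odd_coeff_prod_iff (N : ℕ) :
    Odd (PowerSeries.coeff N (fEta 1 * geomZ)) ↔ ∃ k, gp k ≤ N ∧ N < gm (k+1) := by
  rw [coeff_mul_geom, int_odd_sum, ← odd_pent_card_iff]
  congr! 2
  ext m
  simp only [Finset.mem_filter, odd_coeff_fEta_one]

lemma ico_disjoint {k j : ℕ} (h : k < j) :
    Disjoint (Finset.Ico (gp k) (gm (k+1))) (Finset.Ico (gp j) (gm (j+1))) := by
  rw [Finset.disjoint_left]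
  intro n h1 h2
  rw [Finset.mem_Ico] at h1 h2
  have ha : gm (k+1) ≤ gp (k+1) := by have := gp_eq_gm_add (k+1); omega
  have hb : gp (k+1) ≤ gp j := gp_strictMono.le_iff_le.2 (by omega)
  omega

lemma ico_disjoint' {k j : ℕ} (h : k ≠ j) :
    Disjoint (Finset.Ico (gp k) (gm (k+1))) (Finset.Ico (gp j) (gm (j+1))) := by
  rcases Nat.lt_or_ge k j with h' | h'
  · exact ico_disjoint h'
  · exact (ico_disjoint (by omega)).symm

lemma sum_card_ico (K : ℕ) :
    ∑ k ∈ range K, (Finset.Ico (gp k) (gm (k+1))).card = K * K := by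
  induction K with
  | zero => simp
  | succ K ih =>
    rw [Finset.sum_range_succ, ih, Nat.card_Ico]
    have := gm_succ_eq K
    have h2 : (K+1)*(K+1) = K*K + 2*K+1 := by ring
    omega

lemma oddCount_lower (x : ℕ) :
    Kof x * Kof x ≤ oddCount (fEta 1 * geomZ) x := by
  rw [oddCount]
  have hsub : (range (Kof x)).biUnion (fun k => Finset.Ico (gp k) (gm (k+1))) ⊆
      (range (x+1)).filter (fun n => Odd (PowerSeries.coeff n (fEta 1 * geomZ))) := by
    intro n hn
    rw [Finset.mem_biUnion] at hn
    obtain ⟨k, hk, hn⟩ := hn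
    rw [Finset.mem_Ico] at hn
    rw [Finset.mem_filter, odd_coeff_prod_iff]
    refine ⟨Finset.mem_range.mpr ?_, k, hn.1, hn.2⟩
    have h1 : gp (k+1) ≤ gp (Kof x) := gp_strictMono.le_iff_le.2 (Finset.mem_range.mp hk)
    have h2 := gp_Kof_le x
    have h3 := gp_eq_gm_add (k+1)
    omega
  calc Kof x * Kof x
      = ((range (Kof x)).biUnion fun k => Finset.Ico (gp k) (gm (k+1))).card := by
        rw [Finset.card_biUnion (fun k _ j _ h => ico_disjoint' h), sum_card_ico]
    _ ≤ _ := Finset.card_le_card hsub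

lemma oddCount_upper (x : ℕ) :
    oddCount (fEta 1 * geomZ) x ≤ (Kof x + 1) * (Kof x + 1) := by
  rw [oddCount]
  have hsub : (range (x+1)).filter (fun n => Odd (PowerSeries.coeff n (fEta 1 * geomZ)))
      ⊆ (range (Kof x + 1)).biUnion (fun k => Finset.Ico (gp k) (gm (k+1))) := by
    intro n hn
    rw [Finset.mem_filter, odd_coeff_prod_iff] at hn
    obtain ⟨hnx, k, h1, h2⟩ := hn
    rw [Finset.mem_biUnion]
    refine ⟨k, Finset.mem_range.mpr ?_, Finset.mem_Ico.mpr ⟨h1, h2⟩⟩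
    have := le_Kof (show gp k ≤ x by have := Finset.mem_range.mp hnx; omega)
    omega
  calc _ ≤ ((range (Kof x + 1)).biUnion fun k => Finset.Ico (gp k) (gm (k+1))).card :=
        Finset.card_le_card hsub
    _ ≤ ∑ k ∈ range (Kof x + 1), (Finset.Ico (gp k) (gm (k+1))).card := Finset.card_biUnion_le
    _ = (Kof x + 1) * (Kof x + 1) := sum_card_ico _

lemma two_mul_gp (k : ℕ) : 2 * gp k = 3*k*k + k := by
  induction k with
  | zero => rfl
  | succ k ih =>
    have h : 3*(k+1)*(k+1) = 3*k*k + 6*k + 3 := by ring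
    simp only [gp]
    omega

open Filter in
lemma Kof_tendsto : Tendsto (fun x => Kof x) atTop atTop := by
  apply Filter.tendsto_atTop_atTop.mpr
  intro b
  exact ⟨gp b, fun x hx => le_Kof hx⟩

open Filter in
lemma rat_lim (a b c d : ℝ) (hc : 0 ≤ c) (hd : 0 ≤ d) :
    Tendsto (fun k : ℕ => (2*(k:ℝ)^2 + a*k + b)/(3*(k:ℝ)^2 + c*k + d))
      atTop (nhds (2/3)) := by
  have h0 : Tendsto (fun k : ℕ => 1/(k:ℝ)) atTop (nhds 0) :=
    tendsto_one_div_atTop_nhds_zero_nat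
  have h1 : Tendsto (fun k : ℕ => 2 + (a*(1/(k:ℝ)) + b*(1/(k:ℝ))^2)) atTop (nhds 2) := by
    have := (tendsto_const_nhds : Tendsto (fun _ : ℕ => (2:ℝ)) atTop (nhds 2)).add
      ((h0.const_mul a).add ((h0.pow 2).const_mul b))
    simpa using this
  have h2 : Tendsto (fun k : ℕ => 3 + (c*(1/(k:ℝ)) + d*(1/(k:ℝ))^2)) atTop (nhds 3) := by
    have := (tendsto_const_nhds : Tendsto (fun _ : ℕ => (3:ℝ)) atTop (nhds 3)).add
      ((h0.const_mul c).add ((h0.pow 2).const_mul d))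
    simpa using this
  have h3 := h1.div h2 (by norm_num)
  apply h3.congr'
  filter_upwards [eventually_ge_atTop 1] with k hk
  have hk0 : (0:ℝ) < (k:ℝ) := by exact_mod_cast Nat.pos_of_ne_zero (by omega)
  have hden : (0:ℝ) < 3*(k:ℝ)^2 + c*k + d := by positivity
  show (2 + (a*(1/(k:ℝ)) + b*(1/(k:ℝ))^2)) / (3 + (c*(1/(k:ℝ)) + d*(1/(k:ℝ))^2)) = _
  field_simp
  ring

open Filter in
lemma lim_lb : Tendsto (fun k : ℕ => ((k:ℝ)^2)/(gp (k+1) : ℝ)) atTop (nhds (2/3)) := by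
  apply Tendsto.congr _ (rat_lim 0 0 7 4 (by norm_num) (by norm_num))
  intro k
  have h : (2:ℝ) * (gp (k+1) : ℝ) = 3*(k:ℝ)^2 + 7*k + 4 := by
    have h1 := two_mul_gp (k+1)
    have h2 : 2 * gp (k+1) = 3*k*k + 7*k + 4 := by rw [h1]; ring
    have h3 : ((2 * gp (k+1) : ℕ) : ℝ) = ((3*k*k + 7*k + 4 : ℕ) : ℝ) := by rw [h2]
    push_cast at h3
    linarith [h3]
  have hpos : (0:ℝ) < (gp (k+1) : ℝ) := by
    have : 2 ≤ gp (k+1) := by have := two_le_gp (k := k+1) (by omega); omega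
    exact_mod_cast by omega
  rw [div_eq_div_iff (by positivity : (3*(k:ℝ)^2 + 7*k + 4) ≠ 0) (ne_of_gt hpos)]
  nlinarith [h]

open Filter in
lemma lim_ub : Tendsto (fun k : ℕ => (((k:ℝ)+1)^2)/(gp k : ℝ)) atTop (nhds (2/3)) := by
  apply Tendsto.congr' _ (rat_lim 4 2 1 0 (by norm_num) (by norm_num))
  filter_upwards [eventually_ge_atTop 1] with k hk
  have h : (2:ℝ) * (gp k : ℝ) = 3*(k:ℝ)^2 + k := by
    have h1 := two_mul_gp k
    have h3 : ((2 * gp k : ℕ) : ℝ) = ((3*k*k + k : ℕ) : ℝ) := by rw [h1]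
    push_cast at h3
    linarith [h3]
  have hpos : (0:ℝ) < (gp k : ℝ) := by
    have : 2 ≤ gp k := by have := two_le_gp (k := k) (by omega); omega
    exact_mod_cast by omega
  rw [div_eq_div_iff (by positivity) (by linarith)]
  nlinarith [h]

open Filter in
theorem main_result :
    Tendsto (fun x : ℕ => (oddCount (fEta 1 * geomZ) x : ℝ) / x) atTop (nhds (2/3)) := by
  apply tendsto_of_tendsto_of_tendsto_of_le_of_le' (lim_lb.comp Kof_tendsto)
    (lim_ub.comp Kof_tendsto)
  · filter_upwards [eventually_ge_atTop 1] with x hx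
    have h1 : ((Kof x * Kof x : ℕ) : ℝ) ≤ (oddCount (fEta 1 * geomZ) x : ℝ) := by
      exact_mod_cast oddCount_lower x
    have h2 : (x:ℝ) < (gp (Kof x + 1) : ℝ) := by exact_mod_cast lt_gp_Kof_succ x
    have hx0 : (0:ℝ) < (x:ℝ) := by exact_mod_cast Nat.pos_of_ne_zero (by omega)
    have hg : (0:ℝ) < (gp (Kof x + 1) : ℝ) := lt_trans hx0 h2
    show ((Kof x:ℝ)^2)/(gp (Kof x + 1) : ℝ) ≤ _
    rw [div_le_div_iff₀ hg hx0]
    push_cast at h1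
    nlinarith [Nat.cast_nonneg (α := ℝ) (oddCount (fEta 1 * geomZ) x), h1, h2,
      sq_nonneg ((Kof x : ℝ))]
  · filter_upwards [eventually_ge_atTop (gp 2)] with x hx
    have hK2 : 2 ≤ Kof x := le_Kof hx
    have hgp2 : (7:ℕ) ≤ gp (Kof x) := by
      have h := gp_strictMono.le_iff_le.2 hK2
      have : gp 2 = 7 := rfl
      omega
    have h1 : (oddCount (fEta 1 * geomZ) x : ℝ) ≤ ((Kof x + 1) * (Kof x + 1) : ℕ) := by
      exact_mod_cast oddCount_upper x
    have h2 : (gp (Kof x) : ℝ) ≤ (x:ℝ) := by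
      exact_mod_cast gp_Kof_le x
    have hx0 : (0:ℝ) < (x:ℝ) := by
      have : (1:ℕ) ≤ x := le_trans (by decide) hx
      exact_mod_cast Nat.pos_of_ne_zero (by omega)
    have hg : (0:ℝ) < (gp (Kof x) : ℝ) := by
      have : (0:ℕ) < gp (Kof x) := by omega
      exact_mod_cast this
    show _ ≤ ((Kof x:ℝ)+1)^2/(gp (Kof x) : ℝ)
    rw [div_le_div_iff₀ hx0 hg]
    push_cast at h1
    nlinarith [h1, h2, Nat.cast_nonneg (α := ℝ) (oddCount (fEta 1 * geomZ) x)]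

/-- The number of odd coefficients of `f_1/(1-q)` in degrees `n ≤ x` is
asymptotic to `2x/3`. -/
theorem oddCount_fEta_mul_geom_asymp :
    Filter.Tendsto (fun x : ℕ => (oddCount (fEta 1 * geomZ) x : ℝ) / x)
      Filter.atTop (nhds (2 / 3)) := by
  exact main_result
end

section
/- For any positive integer d, the number of odd coefficients of f_1^{2^d}/(1-q) in degrees n ≤ x is asymptotic to 2x/3 as x → ∞. -/
open scoped Classical
open Finset Filter

/-- second-kind pentagonal numbers `k(3k+1)/2`. -/
def P2 : ℕ → ℕ
  | 0 => 0
  | (k+1) => P2 k + (3*k+2)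

/-- first-kind pentagonal numbers `k(3k-1)/2`. -/
def P1 : ℕ → ℕ
  | 0 => 0
  | (k+1) => P2 k + (2*k+1)

lemma P2_lt_P1_succ (k : ℕ) : P2 k < P1 (k+1) := by simp [P1]
lemma P1_le_P2 (k : ℕ) : P1 k ≤ P2 k := by
  cases k with
  | zero => simp [P1, P2]
  | succ j => show P2 j + (2*j+1) ≤ P2 j + (3*j+2); omega
lemma P1_lt_P2 (k : ℕ) (hk : 1 ≤ k) : P1 k < P2 k := by
  cases k with
  | zero => omega
  | succ j => show P2 j + (2*j+1) < P2 j + (3*j+2); omega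
lemma P2_strictMono : StrictMono P2 :=
  strictMono_nat_of_lt_succ (fun k => by show P2 k < P2 k + (3*k+2); omega)
lemma P1_strictMono : StrictMono P1 := by
  apply strictMono_nat_of_lt_succ
  intro k
  calc P1 k ≤ P2 k := P1_le_P2 k
  _ < P1 (k+1) := P2_lt_P1_succ k
lemma le_P2 (k : ℕ) : k ≤ P2 k := by
  induction k with
  | zero => simp [P2]
  | succ j ih => show j + 1 ≤ P2 j + (3*j+2); omega
lemma two_P2 (k : ℕ) : 2 * P2 k = 3*k*k + k := by
  induction k with
  | zero => simp [P2]
  | succ j ih =>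
    show 2 * (P2 j + (3*j+2)) = _
    rw [mul_add, ih]; ring
lemma two_P1 (k : ℕ) : 2 * P1 k + k = 3*k*k := by
  cases k with
  | zero => simp [P1]
  | succ j =>
    show 2 * (P2 j + (2*j+1)) + (j+1) = _
    rw [mul_add, two_P2]; ring

/-- generalized pentagonal numbers -/
def IsPent (n : ℕ) : Prop := ∃ k, n = P1 k ∨ n = P2 k

lemma isPent_zero : IsPent 0 := ⟨0, Or.inl rfl⟩

/-- the region where the pentagonal counting function is odd -/
def OddAt (N : ℕ) : Prop := ∃ k, P2 k ≤ N ∧ N < P1 (k+1)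

lemma oddAt_zero : OddAt 0 := ⟨0, by simp [P1, P2]⟩

noncomputable def pentCount (N : ℕ) : ℕ := ((range (N+1)).filter IsPent).card

lemma pentCount_succ (N : ℕ) :
    pentCount (N+1) = pentCount N + (if IsPent (N+1) then 1 else 0) := by
  unfold pentCount
  rw [range_add_one, filter_insert]
  split
  · rw [card_insert_of_notMem (by simp)]
  · simp

lemma isPent_cases {n : ℕ} (h : IsPent n) (hn : n ≠ 0) :
    (∃ k, 1 ≤ k ∧ n = P2 k) ∨ (∃ k, n = P1 (k+1)) := by
  obtain ⟨k, hk | hk⟩ := h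
  · right
    cases k with
    | zero => exact absurd hk (by simpa [P1] using hn)
    | succ j => exact ⟨j, hk⟩
  · left
    refine ⟨k, ?_, hk⟩
    cases k with
    | zero => exact absurd hk (by simpa [P2] using hn)
    | succ j => omega

lemma odd_pentCount (N : ℕ) : Odd (pentCount N) ↔ OddAt N := by
  induction N with
  | zero =>
    have h1 : pentCount 0 = 1 := by
      unfold pentCount
      rw [show range 1 = {0} by rfl]
      rw [filter_singleton, if_pos isPent_zero]
      rfl
    rw [h1]
    exact ⟨fun _ => oddAt_zero, fun _ => odd_one⟩
  | succ N ih =>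
    rw [pentCount_succ]
    by_cases hp : IsPent (N+1)
    · rw [if_pos hp, Nat.odd_add_one, ih]
      rcases isPent_cases hp (by omega) with ⟨k, hk1, hk⟩ | ⟨k, hk⟩
      · -- N+1 = P2 k : flips from even to odd
        have hnotN : ¬ OddAt N := by
          rintro ⟨j, hj1, hj2⟩
          rcases lt_trichotomy j k with h | h | h
          · have h5 : P1 (j+1) ≤ P1 k := P1_strictMono.le_iff_le.2 (by omega)
            have h6 : P1 k < P2 k := P1_lt_P2 k hk1
            omega
          · subst h; omega
          · have h5 : P2 k < P2 j := P2_strictMono h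
            omega
        have hN1 : OddAt (N+1) := by
          refine ⟨k, by omega, ?_⟩
          have h5 := P2_lt_P1_succ k
          omega
        tauto
      · -- N+1 = P1 (k+1) : flips from odd to even
        have hN : OddAt N := by
          refine ⟨k, ?_, by omega⟩
          have h5 := P2_lt_P1_succ k
          omega
        have hnotN1 : ¬ OddAt (N+1) := by
          rintro ⟨j, hj1, hj2⟩
          rcases lt_trichotomy j k with h | h | h
          · have h5 : P1 (j+1) ≤ P1 k := P1_strictMono.le_iff_le.2 (by omega)
            have h6 : P1 k ≤ P2 k := P1_le_P2 k
            have h7 := P2_lt_P1_succ k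
            omega
          · subst h; omega
          · have h5 : P2 (k+1) ≤ P2 j := P2_strictMono.le_iff_le.2 (by omega)
            have h6 := P2_lt_P1_succ k
            have h7 : P1 (k+1) < P2 (k+1) := P1_lt_P2 (k+1) (by omega)
            omega
        tauto
    · rw [if_neg hp, add_zero, ih]
      constructor
      · rintro ⟨k, hk1, hk2⟩
        refine ⟨k, by omega, ?_⟩
        rcases Nat.lt_or_ge (N+1) (P1 (k+1)) with h | h
        · exact h
        · exact absurd ⟨k+1, Or.inl (by omega)⟩ hp
      · rintro ⟨k, hk1, hk2⟩
        refine ⟨k, ?_, by omega⟩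
        rcases Nat.lt_or_ge N (P2 k) with h | h
        · exact absurd ⟨k, Or.inr (by omega)⟩ hp
        · exact h
noncomputable def Rcnt (y : ℕ) : ℕ := ((range y).filter OddAt).card

lemma Rcnt_mono : Monotone Rcnt := by
  intro a b hab
  exact card_le_card (filter_subset_filter _ (by simpa using hab))

lemma Rcnt_P2 (K : ℕ) : Rcnt (P2 K) = K * K := by
  induction K with
  | zero => simp [Rcnt, P2]
  | succ K ih =>
    have hle : P2 K ≤ P2 (K+1) := (P2_strictMono (by omega)).le
    have hsplit : range (P2 (K+1)) = range (P2 K) ∪ Ico (P2 K) (P2 (K+1)) := by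
      simp only [range_eq_Ico]
      exact (Finset.Ico_union_Ico_eq_Ico (by omega) hle).symm
    have hdisj : Disjoint ((range (P2 K)).filter OddAt) ((Ico (P2 K) (P2 (K+1))).filter OddAt) := by
      apply Finset.disjoint_filter_filter
      rw [range_eq_Ico]
      exact Finset.Ico_disjoint_Ico_consecutive _ _ _
    have hchunk : (Ico (P2 K) (P2 (K+1))).filter OddAt = Ico (P2 K) (P1 (K+1)) := by
      ext N
      simp only [mem_filter, mem_Ico]
      constructor
      · rintro ⟨⟨h1, h2⟩, j, hj1, hj2⟩
        refine ⟨h1, ?_⟩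
        rcases lt_trichotomy j K with h | h | h
        · have h5 : P1 (j+1) ≤ P1 K := P1_strictMono.le_iff_le.2 (by omega)
          have h6 : P1 K ≤ P2 K := P1_le_P2 K
          omega
        · subst h; omega
        · have h5 : P2 (K+1) ≤ P2 j := P2_strictMono.le_iff_le.2 (by omega)
          omega
      · rintro ⟨h1, h2⟩
        have h5 := P2_lt_P1_succ (K+1)
        have h6 : P1 (K+1) ≤ P2 (K+1) := P1_le_P2 (K+1)
        exact ⟨⟨h1, by omega⟩, K, h1, h2⟩
    unfold Rcnt
    rw [hsplit, filter_union, card_union_of_disjoint hdisj, hchunk]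
    rw [Nat.card_Ico]
    unfold Rcnt at ih
    rw [ih]
    have h7 : P1 (K+1) = P2 K + (2*K+1) := rfl
    rw [h7]
    ring_nf
    omega

/-- inverse of P2 -/
noncomputable def Kf (y : ℕ) : ℕ := Nat.findGreatest (fun k => P2 k ≤ y) y

lemma Kf_spec (y : ℕ) : P2 (Kf y) ≤ y := by
  unfold Kf
  exact Nat.findGreatest_spec (P := fun k => P2 k ≤ y) (n := y) (m := 0) (Nat.zero_le y)
    (by simp [P2])

lemma Kf_lt (y : ℕ) : y < P2 (Kf y + 1) := by
  by_contra h
  push_neg at h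
  have h2 : Kf y + 1 ≤ y := le_trans (le_P2 _) h
  exact Nat.findGreatest_is_greatest (Nat.lt_succ_self _) h2 h

lemma Kf_tendsto : Tendsto Kf atTop atTop := by
  rw [tendsto_atTop]
  intro b
  rw [eventually_atTop]
  refine ⟨P2 b, fun y hy => ?_⟩
  exact Nat.le_findGreatest (le_trans (le_P2 b) hy) hy

lemma Kf_ge (y : ℕ) (h : P2 1 ≤ y) : 1 ≤ Kf y :=
  Nat.le_findGreatest (le_trans (le_P2 1) h) h

lemma Rcnt_lower (y : ℕ) : Kf y * Kf y ≤ Rcnt y := by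
  rw [← Rcnt_P2]; exact Rcnt_mono (Kf_spec y)

lemma Rcnt_upper (y : ℕ) : Rcnt y ≤ (Kf y + 1) * (Kf y + 1) := by
  rw [← Rcnt_P2]; exact Rcnt_mono (Kf_lt y).le

-- real limits
lemma P2_real (k : ℕ) : (P2 k : ℝ) = (3*k*k + k)/2 := by
  have := two_P2 k
  have h2 : ((2 * P2 k : ℕ) : ℝ) = ((3*k*k + k : ℕ) : ℝ) := by rw [this]
  push_cast at h2
  linarith

lemma g1_tendsto :
    Tendsto (fun k : ℕ => (k : ℝ)^2 / (P2 (k+1) : ℝ)) atTop (nhds (2/3)) := by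
  have h0 : Tendsto (fun k : ℕ => (1 : ℝ)/k) atTop (nhds 0) :=
    tendsto_one_div_atTop_nhds_zero_nat
  have hlim : Tendsto (fun k : ℕ => 2/(3 + 7*(1/(k:ℝ)) + 4*(1/(k:ℝ))^2)) atTop
      (nhds (2/3)) := by
    have : Tendsto (fun k : ℕ => 3 + 7*(1/(k:ℝ)) + 4*(1/(k:ℝ))^2) atTop (nhds 3) := by
      have := ((h0.const_mul 7).const_add 3).add ((h0.pow 2).const_mul 4)
      simpa using this
    have h2 := (tendsto_const_nhds (x := (2:ℝ))).div this (by norm_num)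
    exact h2
  apply hlim.congr'
  filter_upwards [eventually_ge_atTop 1] with k hk
  have hk0 : (k : ℝ) > 0 := by exact_mod_cast hk
  rw [P2_real]
  push_cast
  field_simp
  ring

lemma g2_tendsto :
    Tendsto (fun k : ℕ => ((k : ℝ)+1)^2 / (P2 k : ℝ)) atTop (nhds (2/3)) := by
  have h0 : Tendsto (fun k : ℕ => (1 : ℝ)/k) atTop (nhds 0) :=
    tendsto_one_div_atTop_nhds_zero_nat
  have hlim : Tendsto (fun k : ℕ => (2*(1 + (1/(k:ℝ)))^2)/(3 + (1/(k:ℝ)))) atTop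
      (nhds (2/3)) := by
    have hden : Tendsto (fun k : ℕ => 3 + (1/(k:ℝ))) atTop (nhds 3) := by
      simpa using h0.const_add 3
    have hnum : Tendsto (fun k : ℕ => 2*(1 + (1/(k:ℝ)))^2) atTop (nhds 2) := by
      have := ((h0.const_add 1).pow 2).const_mul 2
      simpa using this
    have h2 := hnum.div hden (by norm_num)
    exact h2
  apply hlim.congr'
  filter_upwards [eventually_ge_atTop 1] with k hk
  have hk0 : (k : ℝ) > 0 := by exact_mod_cast hk
  rw [P2_real]
  field_simp

lemma Rcnt_tendsto :
    Tendsto (fun y : ℕ => (Rcnt y : ℝ) / y) atTop (nhds (2/3)) := by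
  have hg1 : Tendsto (fun y : ℕ => ((Kf y : ℝ))^2 / (P2 (Kf y + 1) : ℝ)) atTop (nhds (2/3)) :=
    g1_tendsto.comp Kf_tendsto
  have hg2 : Tendsto (fun y : ℕ => ((Kf y : ℝ)+1)^2 / (P2 (Kf y) : ℝ)) atTop (nhds (2/3)) :=
    g2_tendsto.comp Kf_tendsto
  apply tendsto_of_tendsto_of_tendsto_of_le_of_le' hg1 hg2
  · filter_upwards [eventually_ge_atTop (P2 1)] with y hy
    have hy0 : (0:ℝ) < y := by
      have : (1:ℕ) ≤ y := le_trans (by simp [P2]) hy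
      exact_mod_cast this
    have h1 : (Kf y : ℝ)^2 ≤ Rcnt y := by
      have h2 : ((Kf y * Kf y : ℕ) : ℝ) ≤ (Rcnt y : ℝ) := by
        exact_mod_cast Rcnt_lower y
      push_cast at h2
      rw [sq]
      exact h2
    have h2 : (y : ℝ) ≤ (P2 (Kf y + 1) : ℝ) := by exact_mod_cast (Kf_lt y).le
    exact div_le_div₀ (by positivity) h1 hy0 h2
  · filter_upwards [eventually_ge_atTop (P2 1)] with y hy
    have hy0 : (0:ℝ) < y := by
      have : (1:ℕ) ≤ y := le_trans (by simp [P2]) hy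
      exact_mod_cast this
    have hK1 : 1 ≤ Kf y := Kf_ge y hy
    have hP2pos : (0:ℝ) < (P2 (Kf y) : ℝ) := by
      have h4 : 1 ≤ P2 (Kf y) := le_trans (by simp [P2]) (P2_strictMono.le_iff_le.2 hK1)
      exact_mod_cast h4
    have h1 : (Rcnt y : ℝ) ≤ ((Kf y : ℝ)+1)^2 := by
      have h2 : ((Rcnt y : ℕ) : ℝ) ≤ (((Kf y + 1) * (Kf y + 1) : ℕ) : ℝ) := by
        exact_mod_cast Rcnt_upper y
      push_cast at h2
      rw [sq]
      exact h2
    have h2 : (P2 (Kf y) : ℝ) ≤ y := by exact_mod_cast Kf_spec y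
    exact div_le_div₀ (by positivity) h1 hP2pos h2
noncomputable def Qcnt (D x : ℕ) : ℕ :=
  ((range (x+1)).filter (fun n => OddAt (n / D))).card

lemma Qcnt_lower (D x : ℕ) (hD : 0 < D) : D * Rcnt (x / D) ≤ Qcnt D x := by
  set y := x / D with hy
  have key : (((range y).filter OddAt) ×ˢ range D).card ≤ Qcnt D x := by
    apply Finset.card_le_card_of_injOn (fun p => D * p.1 + p.2)
    · rintro ⟨N, i⟩ hp
      simp only [Finset.mem_coe, Finset.mem_product, mem_filter, mem_range] at hp
      obtain ⟨⟨hN, hodd⟩, hi⟩ := hp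
      simp only [Qcnt, Finset.mem_coe, mem_filter, mem_range]
      have hdiv : (D * N + i) / D = N := by
        rw [Nat.mul_add_div hD, Nat.div_eq_of_lt hi, add_zero]
      constructor
      · have h1 : D * N + i < D * y := by
          calc D * N + i < D * N + D := by omega
          _ = D * (N + 1) := by ring
          _ ≤ D * y := Nat.mul_le_mul_left D (by omega)
        have h2 : D * y ≤ x := by rw [hy]; exact Nat.mul_div_le x D
        omega
      · rw [hdiv]; exact hodd
    · rintro ⟨N, i⟩ hp ⟨N', i'⟩ hp' heq
      simp only [Finset.coe_product, Set.mem_prod, coe_filter, Set.mem_setOf_eq,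
        mem_range, mem_coe] at hp hp'
      simp only [Prod.mk.injEq] at *
      have : N = N' := by
        have h1 : (D * N + i) / D = N := by
          rw [Nat.mul_add_div hD, Nat.div_eq_of_lt (by tauto), add_zero]
        have h2 : (D * N' + i') / D = N' := by
          rw [Nat.mul_add_div hD, Nat.div_eq_of_lt (by tauto), add_zero]
        rw [← h1, ← h2, heq]
      constructor
      · exact this
      · subst this; omega
  calc D * Rcnt y = (((range y).filter OddAt) ×ˢ range D).card := by
        rw [Finset.card_product, Rcnt, Finset.card_range, mul_comm]
  _ ≤ Qcnt D x := key

lemma Qcnt_upper (D x : ℕ) (hD : 0 < D) : Qcnt D x ≤ D * Rcnt (x / D + 1) := by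
  set y := x / D with hy
  set s := (range (x+1)).filter (fun n => OddAt (n / D)) with hs
  have h1 : s.card ≤ D * (s.image (· / D)).card := by
    apply Finset.card_le_mul_card_image
    intro b _
    have hsub : s.filter (fun a => a / D = b) ⊆ Ico (D * b) (D * b + D) := by
      intro n hn
      simp only [mem_filter, mem_Ico] at hn ⊢
      obtain ⟨_, hnb⟩ := hn
      have hb1 : D * b ≤ n := by rw [mul_comm, ← Nat.le_div_iff_mul_le hD, hnb]
      have hb2 : n < (b+1) * D := by
        rw [← Nat.div_lt_iff_lt_mul hD, hnb]
        omega
      have hb3 : (b+1) * D = D * b + D := by ring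
      omega
    calc (s.filter (fun a => a / D = b)).card ≤ (Ico (D * b) (D * b + D)).card :=
          card_le_card hsub
    _ = D := by rw [Nat.card_Ico]; omega
  have h2 : s.image (· / D) ⊆ (range (y+1)).filter OddAt := by
    intro b hb
    simp only [Finset.mem_image] at hb
    obtain ⟨n, hn, hnb⟩ := hb
    rw [hs] at hn
    simp only [mem_filter, mem_range] at hn ⊢
    obtain ⟨hnx, hodd⟩ := hn
    constructor
    · have : n / D ≤ x / D := Nat.div_le_div_right (by omega)
      omega
    · rw [← hnb]; exact hodd
  calc Qcnt D x = s.card := by rw [Qcnt, hs]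
  _ ≤ D * (s.image (· / D)).card := h1
  _ ≤ D * ((range (y+1)).filter OddAt).card := Nat.mul_le_mul_left D (card_le_card h2)
  _ = D * Rcnt (y+1) := rfl

lemma div_tendsto_atTop (D : ℕ) (hD : 0 < D) :
    Tendsto (fun x : ℕ => x / D) atTop atTop := by
  rw [tendsto_atTop]
  intro b
  rw [eventually_atTop]
  refine ⟨D * b, fun x hx => ?_⟩
  rw [Nat.le_div_iff_mul_le hD, mul_comm]
  exact hx

lemma aux_L_tendsto :
    Tendsto (fun y : ℕ => (Rcnt y : ℝ) / (y + 1)) atTop (nhds (2/3)) := by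
  have h1 : Tendsto (fun y : ℕ => ((Rcnt y : ℝ) / y) * ((y : ℝ)/(y+1))) atTop
      (nhds ((2/3) * 1)) :=
    Rcnt_tendsto.mul (tendsto_natCast_div_add_atTop (1:ℝ))
  rw [mul_one] at h1
  apply h1.congr'
  filter_upwards [eventually_ge_atTop 1] with y hy
  have hy0 : (0:ℝ) < y := by exact_mod_cast hy
  field_simp

lemma aux_U_tendsto :
    Tendsto (fun y : ℕ => (Rcnt (y+1) : ℝ) / y) atTop (nhds (2/3)) := by
  have hr : Tendsto (fun y : ℕ => (Rcnt (y+1) : ℝ) / (y+1)) atTop (nhds (2/3)) := by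
    apply (Rcnt_tendsto.comp (tendsto_add_atTop_nat 1)).congr
    intro y
    simp only [Function.comp]
    push_cast
    ring
  have hinv : Tendsto (fun y : ℕ => ((y:ℝ)+1) / y) atTop (nhds 1) := by
    have h0 : Tendsto (fun y : ℕ => (1 : ℝ)/y) atTop (nhds 0) :=
      tendsto_one_div_atTop_nhds_zero_nat
    have h2 : Tendsto (fun y : ℕ => 1 + (1 : ℝ)/y) atTop (nhds 1) := by
      simpa using h0.const_add 1
    apply h2.congr'
    filter_upwards [eventually_ge_atTop 1] with y hy
    have hy0 : (0:ℝ) < y := by exact_mod_cast hy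
    field_simp
  have h1 := hr.mul hinv
  rw [mul_one] at h1
  apply h1.congr'
  filter_upwards [eventually_ge_atTop 1] with y hy
  have hy0 : (0:ℝ) < y := by exact_mod_cast hy
  have hy1 : ((y:ℝ)+1) ≠ 0 := by positivity
  field_simp

lemma Qcnt_tendsto (D : ℕ) (hD : 0 < D) :
    Tendsto (fun x : ℕ => (Qcnt D x : ℝ) / x) atTop (nhds (2/3)) := by
  have hL : Tendsto (fun x : ℕ => (Rcnt (x / D) : ℝ) / ((x / D : ℕ) + 1)) atTop (nhds (2/3)) := by
    have := aux_L_tendsto.comp (div_tendsto_atTop D hD)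
    exact this
  have hU : Tendsto (fun x : ℕ => (Rcnt (x / D + 1) : ℝ) / ((x / D : ℕ) : ℝ)) atTop (nhds (2/3)) := by
    have := aux_U_tendsto.comp (div_tendsto_atTop D hD)
    exact this
  apply tendsto_of_tendsto_of_tendsto_of_le_of_le' hL hU
  · filter_upwards [eventually_ge_atTop D] with x hx
    set y := x / D with hy
    have hy1 : 1 ≤ y := by
      rw [hy, Nat.le_div_iff_mul_le hD]; omega
    have hx0 : (0:ℝ) < x := by
      have : 1 ≤ x := by omega
      exact_mod_cast this
    have hxlt : x < D * (y + 1) := by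
      have h1 : D * y + x % D = x := by rw [hy]; exact Nat.div_add_mod x D
      have h2 : x % D < D := Nat.mod_lt x hD
      rw [mul_add, mul_one]
      omega
    have hcast : ((Rcnt y : ℝ)) / ((y:ℝ) + 1) = ((D : ℝ) * Rcnt y) / ((D:ℝ) * ((y:ℝ)+1)) := by
      rw [mul_div_mul_left]
      positivity
    rw [hcast]
    apply div_le_div₀ (by positivity) _ hx0 _
    · have h3 : ((D * Rcnt y : ℕ) : ℝ) ≤ ((Qcnt D x : ℕ) : ℝ) := by
        exact_mod_cast Qcnt_lower D x hD
      push_cast at h3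
      exact h3
    · have h4 : (x : ℝ) ≤ ((D * (y+1) : ℕ) : ℝ) := by exact_mod_cast hxlt.le
      push_cast at h4
      linarith
  · filter_upwards [eventually_ge_atTop D] with x hx
    set y := x / D with hy
    have hy1 : 1 ≤ y := by
      rw [hy, Nat.le_div_iff_mul_le hD]; omega
    have hx0 : (0:ℝ) < x := by
      have : 1 ≤ x := by omega
      exact_mod_cast this
    have hylex : D * y ≤ x := by
      rw [hy, mul_comm]
      exact Nat.div_mul_le_self x D
    have hcast : ((Rcnt (y+1) : ℝ)) / ((y:ℝ)) = ((D : ℝ) * Rcnt (y+1)) / ((D:ℝ) * (y:ℝ)) := by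
      rw [mul_div_mul_left]
      positivity
    rw [hcast]
    apply div_le_div₀ (by positivity) _ _ _
    · have h3 : ((Qcnt D x : ℕ) : ℝ) ≤ ((D * Rcnt (y+1) : ℕ) : ℝ) := by
        exact_mod_cast Qcnt_upper D x hD
      push_cast at h3
      exact h3
    · have : (1:ℝ) ≤ (D:ℝ) * (y:ℝ) := by
        have : 1 ≤ D * y := Nat.one_le_iff_ne_zero.2 (by positivity)
        exact_mod_cast this
      linarith
    · have h4 : ((D * y : ℕ) : ℝ) ≤ (x : ℝ) := by exact_mod_cast hylex
      push_cast at h4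
      linarith
/-! ### Franklin's involution -/

noncomputable def dpS (n : ℕ) : Finset (Finset ℕ) :=
  (Icc 1 n).powerset.filter (fun t => ∑ i ∈ t, i = n)

lemma mem_dpS {n : ℕ} {A : Finset ℕ} :
    A ∈ dpS n ↔ A ⊆ Icc 1 n ∧ ∑ i ∈ A, i = n := by
  simp [dpS]

noncomputable def Mx (A : Finset ℕ) : ℕ := if h : A.Nonempty then A.max' h else 0
noncomputable def mnn (A : Finset ℕ) : ℕ := if h : A.Nonempty then A.min' h else 0

lemma Mx_mem {A : Finset ℕ} (h : A.Nonempty) : Mx A ∈ A := by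
  rw [Mx, dif_pos h]; exact A.max'_mem h
lemma le_Mx {A : Finset ℕ} {x : ℕ} (hx : x ∈ A) : x ≤ Mx A := by
  rw [Mx, dif_pos ⟨x, hx⟩]; exact A.le_max' x hx
lemma mnn_mem {A : Finset ℕ} (h : A.Nonempty) : mnn A ∈ A := by
  rw [mnn, dif_pos h]; exact A.min'_mem h
lemma mnn_le {A : Finset ℕ} {x : ℕ} (hx : x ∈ A) : mnn A ≤ x := by
  rw [mnn, dif_pos ⟨x, hx⟩]; exact A.min'_le x hx
lemma Mx_eq {A : Finset ℕ} {x : ℕ} (hx : x ∈ A) (hub : ∀ y ∈ A, y ≤ x) : Mx A = x := by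
  rw [Mx, dif_pos ⟨x, hx⟩]
  exact le_antisymm (A.max'_le _ x hub) (A.le_max' x hx)
lemma mnn_eq {A : Finset ℕ} {x : ℕ} (hx : x ∈ A) (hlb : ∀ y ∈ A, x ≤ y) : mnn A = x := by
  rw [mnn, dif_pos ⟨x, hx⟩]
  exact le_antisymm (A.min'_le x hx) (A.le_min' _ x hlb)

lemma Mx_Icc {a b : ℕ} (h : a ≤ b) : Mx (Icc a b) = b :=
  Mx_eq (by simp [mem_Icc, h]) (fun y hy => (mem_Icc.1 hy).2)
lemma mnn_Icc {a b : ℕ} (h : a ≤ b) : mnn (Icc a b) = a :=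
  mnn_eq (by simp [mem_Icc, h]) (fun y hy => (mem_Icc.1 hy).1)

section TST

variable {A : Finset ℕ} (hpos : ∀ x ∈ A, 1 ≤ x) (hne : A.Nonempty)

include hpos hne

lemma tSt_ex : ∃ j, Mx A - j ∉ A :=
  ⟨Mx A, fun hc => by have := hpos _ hc; omega⟩

noncomputable def tSt (A : Finset ℕ) : ℕ :=
  if h : ∃ j, Mx A - j ∉ A then Nat.find h else 0

lemma tSt_spec : Mx A - tSt A ∉ A := by
  rw [tSt, dif_pos (tSt_ex hpos hne)]
  exact Nat.find_spec (tSt_ex hpos hne)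

lemma tSt_run : ∀ j < tSt A, Mx A - j ∈ A := by
  intro j hj
  rw [tSt, dif_pos (tSt_ex hpos hne)] at hj
  by_contra hc
  have h2 : Nat.find (tSt_ex hpos hne) ≤ j := Nat.find_le hc
  omega

lemma tSt_pos : 1 ≤ tSt A := by
  rcases Nat.eq_zero_or_pos (tSt A) with h | h
  · exfalso
    have := tSt_spec (A := A) hpos hne
    rw [h] at this
    simp only [Nat.sub_zero] at this
    exact this (Mx_mem hne)
  · exact h

lemma tSt_le_Mx : tSt A ≤ Mx A := by
  have h1 : Mx A - Mx A ∉ A := fun hc => by have := hpos _ hc; omega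
  rw [tSt, dif_pos (tSt_ex hpos hne)]
  exact Nat.find_le h1

lemma tSt_eq {t : ℕ} (h1 : Mx A - t ∉ A) (h2 : ∀ j < t, Mx A - j ∈ A) : tSt A = t := by
  rw [tSt, dif_pos (tSt_ex hpos hne), Nat.find_eq_iff]
  exact ⟨h1, fun m hm hc => hc (h2 m hm)⟩

lemma tSt_ge {t : ℕ} (h2 : ∀ j < t, Mx A - j ∈ A) : t ≤ tSt A := by
  rw [tSt, dif_pos (tSt_ex hpos hne), Nat.le_find_iff]
  exact fun m hm hc => hc (h2 m hm)

lemma tSt_le_card : tSt A ≤ A.card := by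
  have h1 : ∀ j ∈ range (tSt A), Mx A - j ∈ A := fun j hj =>
    tSt_run hpos hne j (mem_range.1 hj)
  have h2 : Set.InjOn (fun j => Mx A - j) (range (tSt A)) := by
    intro i hi j hj hij
    simp only [mem_coe, mem_range] at hi hj
    have hi' : i < tSt A := hi
    have hj' : j < tSt A := hj
    have := tSt_le_Mx hpos hne (A := A)
    simp only at hij
    omega
  calc tSt A = (range (tSt A)).card := by rw [card_range]
  _ ≤ A.card := Finset.card_le_card_of_injOn _ h1 h2

lemma mnn_le_run_bot : mnn A ≤ Mx A - tSt A + 1 := by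
  have h1 : Mx A - (tSt A - 1) ∈ A := tSt_run hpos hne _ (by have := tSt_pos hpos hne; omega)
  have h2 := mnn_le h1
  have h3 := tSt_pos hpos hne
  have h4 := tSt_le_Mx hpos hne (A := A)
  omega

/-- if the minimum is the bottom of the maximal staircase then `A` is an interval -/
lemma interval_of_bot (hbot : mnn A = Mx A - tSt A + 1) :
    A = Icc (mnn A) (Mx A) := by
  apply Finset.Subset.antisymm
  · intro x hx
    rw [mem_Icc]
    exact ⟨mnn_le hx, le_Mx hx⟩
  · intro x hx
    rw [mem_Icc] at hx
    have h4 := tSt_le_Mx hpos hne (A := A)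
    have h5 := tSt_pos hpos hne
    have h1 : Mx A - x < tSt A := by omega
    have := tSt_run hpos hne (Mx A - x) h1
    have h2 : Mx A - (Mx A - x) = x := by omega
    rwa [h2] at this

end TST

lemma tSt_Icc' {a b : ℕ} (ha : 1 ≤ a) (h : a ≤ b) : tSt (Icc a b) = b - a + 1 := by
  apply tSt_eq (fun x hx => le_trans ha (mem_Icc.1 hx).1) ⟨a, by rw [mem_Icc]; omega⟩
  · rw [Mx_Icc h, mem_Icc]
    omega
  · intro j hj
    rw [Mx_Icc h, mem_Icc]
    omega


noncomputable def phi (A : Finset ℕ) : Finset ℕ :=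
  if mnn A ≤ tSt A then
    insert (Mx A + 1) ((A.erase (mnn A)).erase (Mx A - mnn A + 1))
  else
    insert (tSt A) (insert (Mx A - tSt A) (A.erase (Mx A)))

def Exc (A : Finset ℕ) : Prop :=
  ∃ m, 1 ≤ m ∧ (A = Icc m (2*m-1) ∨ A = Icc (m+1) (2*m))

lemma two_sum_Icc (a b : ℕ) (h : a ≤ b) :
    2 * (∑ i ∈ Icc a b, i) = (b + 1 - a) * (a + b) := by
  obtain ⟨e, rfl⟩ : ∃ e, b = a + e := ⟨b - a, by omega⟩
  have h1 : Icc a (a+e) = Ico a (a+e+1) := rfl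
  rw [h1, Finset.sum_Ico_eq_sum_range]
  have h2 : a + e + 1 - a = e + 1 := by omega
  rw [h2, Finset.sum_add_distrib, Finset.sum_const, card_range, smul_eq_mul]
  have h3 := Finset.sum_range_id_mul_two (e+1)
  have h5 : 2 * (∑ x ∈ range (e+1), x) = (e+1) * e := by
    calc 2 * (∑ x ∈ range (e+1), x) = (∑ x ∈ range (e+1), x) * 2 := by ring
    _ = (e+1) * ((e+1) - 1) := h3
    _ = (e+1) * e := by congr 1
  have h6 : a + (a + e) = 2*a + e := by omega
  rw [h6, mul_add, h5]
  ring

lemma sum_Icc_P1 (k : ℕ) (hk : 1 ≤ k) : ∑ i ∈ Icc k (2*k-1), i = P1 k := by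
  obtain ⟨j, rfl⟩ : ∃ j, k = j + 1 := ⟨k - 1, by omega⟩
  have h0 : 2*(j+1) - 1 = 2*j+1 := by omega
  rw [h0]
  have h1 := two_sum_Icc (j+1) (2*j+1) (by omega)
  have h2 : (2*j+1) + 1 - (j+1) = j + 1 := by omega
  rw [h2] at h1
  have h3 := two_P1 (j+1)
  have h4 : (j+1) * ((j+1) + (2*j+1)) + (j+1) = 3*(j+1)*(j+1) := by ring
  omega

lemma sum_Icc_P2 (k : ℕ) (hk : 1 ≤ k) : ∑ i ∈ Icc (k+1) (2*k), i = P2 k := by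
  have h1 := two_sum_Icc (k+1) (2*k) (by omega)
  have h2 : (2*k) + 1 - (k+1) = k := by omega
  rw [h2] at h1
  have h3 := two_P2 k
  have h4 : k * ((k+1) + 2*k) = 3*k*k + k := by ring
  omega

lemma P1_ne_P2 {m k : ℕ} (hm : 1 ≤ m) (hk : 1 ≤ k) : P1 k ≠ P2 m := by
  rcases le_or_gt k m with h | h
  · have h1 : P1 k < P2 k := P1_lt_P2 k hk
    have h2 : P2 k ≤ P2 m := P2_strictMono.le_iff_le.2 h
    omega
  · have h1 : P2 m < P1 (m+1) := P2_lt_P1_succ m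
    have h2 : P1 (m+1) ≤ P1 k := P1_strictMono.le_iff_le.2 (by omega)
    omega
lemma single_le_sum_nat {A : Finset ℕ} {x : ℕ} (hx : x ∈ A) : x ≤ ∑ i ∈ A, i :=
  Finset.single_le_sum (fun i _ => Nat.zero_le i) hx

lemma phi_case1 {n : ℕ} {A : Finset ℕ} (hA : A ∈ dpS n)
    (hnex : ¬ Exc A) (hne : A.Nonempty) (hst : mnn A ≤ tSt A) :
    phi A ∈ dpS n ∧ ¬ Exc (phi A) ∧ (phi A).card + 1 = A.card ∧ phi (phi A) = A := by
  obtain ⟨hsub, hsum⟩ := mem_dpS.1 hA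
  have hpos : ∀ x ∈ A, 1 ≤ x := fun x hx => (mem_Icc.1 (hsub hx)).1
  set s := mnn A with hs
  set M := Mx A with hM
  set t := tSt A with ht
  have hsM : s ≤ M := le_Mx (mnn_mem hne)
  have hs1 : 1 ≤ s := hpos _ (mnn_mem hne)
  have ht1 : 1 ≤ t := tSt_pos hpos hne
  have htM : t ≤ M := tSt_le_Mx hpos hne
  have hbot : s ≤ M - t + 1 := mnn_le_run_bot hpos hne
  have hkey : 2 * s ≤ M := by
    by_contra hc
    push_neg at hc
    have h1 : s = M - t + 1 := by omega
    have h2 : A = Icc s M := interval_of_bot hpos hne h1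
    exact hnex ⟨s, hs1, Or.inl (by rw [h2]; congr 1; omega)⟩
  have hMs1A : M - s + 1 ∈ A := by
    have h1 : M - (s - 1) ∈ A := tSt_run hpos hne (s-1) (by omega)
    have h2 : M - (s - 1) = M - s + 1 := by omega
    rwa [h2] at h1
  have hneq : s ≠ M - s + 1 := by omega
  have hMnotA : M + 1 ∉ A := fun hc => by have := le_Mx hc; omega
  set ee := (A.erase s).erase (M - s + 1) with hee
  have hBdef : phi A = insert (M + 1) ee := by rw [phi, if_pos hst]
  set B := insert (M+1) ee with hB
  have hMs1_in_erase : M - s + 1 ∈ A.erase s :=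
    Finset.mem_erase.2 ⟨Ne.symm hneq, hMs1A⟩
  have hM1ee : M + 1 ∉ ee :=
    fun hc => hMnotA (Finset.mem_of_mem_erase (Finset.mem_of_mem_erase hc))
  have hee_mem : ∀ x, x ∈ ee ↔ (x ≠ M - s + 1 ∧ x ≠ s ∧ x ∈ A) := by
    intro x
    constructor
    · intro h
      have h1 := Finset.mem_erase.1 h
      have h2 := Finset.mem_erase.1 h1.2
      exact ⟨h1.1, h2.1, h2.2⟩
    · rintro ⟨h1, h2, h3⟩
      exact Finset.mem_erase.2 ⟨h1, Finset.mem_erase.2 ⟨h2, h3⟩⟩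
  have hsmem : s ∈ A := mnn_mem hne
  have hsum1 : s + ∑ i ∈ A.erase s, i = n :=
    (Finset.add_sum_erase A (fun i => i) hsmem).trans hsum
  have hsum2 : (M - s + 1) + ∑ i ∈ ee, i = ∑ i ∈ A.erase s, i := by
    rw [hee]
    exact Finset.add_sum_erase _ (fun i => i) hMs1_in_erase
  have hsumB : ∑ i ∈ B, i = n := by
    rw [hB, Finset.sum_insert hM1ee]
    omega
  have hBd : B ∈ dpS n := by
    rw [mem_dpS]
    refine ⟨fun x hx => ?_, hsumB⟩
    rw [mem_Icc]
    refine ⟨?_, le_of_le_of_eq (single_le_sum_nat hx) hsumB⟩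
    rw [hB, Finset.mem_insert] at hx
    rcases hx with h | h
    · omega
    · exact hpos x ((hee_mem x).1 h).2.2
  have hcardB : B.card + 1 = A.card := by
    rw [hB, Finset.card_insert_of_notMem hM1ee, hee,
      Finset.card_erase_of_mem hMs1_in_erase, Finset.card_erase_of_mem (mnn_mem hne)]
    have hcard2 : 2 ≤ A.card := Finset.one_lt_card.2 ⟨s, mnn_mem hne, M - s + 1, hMs1A, hneq⟩
    omega
  have hBne : B.Nonempty := ⟨M+1, by rw [hB]; exact Finset.mem_insert_self _ _⟩
  have hBpos : ∀ x ∈ B, 1 ≤ x := fun x hx => (mem_Icc.1 ((mem_dpS.1 hBd).1 hx)).1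
  have hMxB : Mx B = M + 1 := by
    apply Mx_eq (by rw [hB]; exact Finset.mem_insert_self _ _)
    intro y hy
    rw [hB, Finset.mem_insert] at hy
    rcases hy with h | h
    · omega
    · have := le_Mx ((hee_mem y).1 h).2.2
      omega
  have hmnB : ∀ x ∈ B, s + 1 ≤ x := by
    intro x hx
    rw [hB, Finset.mem_insert] at hx
    rcases hx with h | h
    · omega
    · obtain ⟨h1, h2, h3⟩ := (hee_mem x).1 h
      have h4 := mnn_le h3
      omega
  have hmnB' : s + 1 ≤ mnn B := hmnB _ (mnn_mem hBne)
  have hrunB : ∀ j < s, Mx B - j ∈ B := by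
    intro j hj
    rcases Nat.eq_zero_or_pos j with rfl | hj1
    · rw [hMxB, Nat.sub_zero, hB]
      exact Finset.mem_insert_self _ _
    · rw [hMxB]
      have h1 : M + 1 - j = M - (j - 1) := by omega
      have h2 : M - (j-1) ∈ A := tSt_run hpos hne (j-1) (by omega)
      rw [h1, hB, Finset.mem_insert]
      right
      rw [hee_mem]
      refine ⟨by omega, by omega, h2⟩
  have htB : tSt B = s := by
    apply tSt_eq hBpos hBne
    · rw [hMxB]
      intro hc
      have h1 : M + 1 - s = M - s + 1 := by omega
      rw [h1, hB, Finset.mem_insert] at hc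
      rcases hc with h | h
      · omega
      · exact ((hee_mem _).1 h).1 rfl
    · exact hrunB
  have hphiB : phi B = A := by
    rw [phi, if_neg (by omega : ¬ mnn B ≤ tSt B)]
    rw [htB, hMxB]
    have h1 : M + 1 - s = M - s + 1 := by omega
    rw [h1]
    have h2 : B.erase (M+1) = ee := by rw [hB]; exact Finset.erase_insert hM1ee
    rw [h2, hee]
    rw [Finset.insert_erase hMs1_in_erase, Finset.insert_erase (mnn_mem hne)]
  have hnexB : ¬ Exc B := by
    rintro ⟨m0, hm0, hB1 | hB2⟩
    · have hle : m0 ≤ 2*m0 - 1 := by omega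
      have h1 : mnn B = m0 := by rw [hB1]; exact mnn_Icc hle
      have h2 : tSt B = 2*m0-1 - m0 + 1 := by rw [hB1]; exact tSt_Icc' hm0 hle
      omega
    · have hle : m0+1 ≤ 2*m0 := by omega
      have h1 : Mx B = 2*m0 := by rw [hB2]; exact Mx_Icc hle
      have h2 : tSt B = 2*m0 - (m0+1) + 1 := by rw [hB2]; exact tSt_Icc' (by omega) hle
      omega
  rw [hBdef]
  exact ⟨hBd, hnexB, hcardB, hphiB⟩

lemma phi_case2 {n : ℕ} {A : Finset ℕ} (hA : A ∈ dpS n)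
    (hnex : ¬ Exc A) (hne : A.Nonempty) (hst : tSt A < mnn A) :
    phi A ∈ dpS n ∧ ¬ Exc (phi A) ∧ (phi A).card = A.card + 1 ∧ phi (phi A) = A := by
  obtain ⟨hsub, hsum⟩ := mem_dpS.1 hA
  have hpos : ∀ x ∈ A, 1 ≤ x := fun x hx => (mem_Icc.1 (hsub hx)).1
  set s := mnn A with hs
  set M := Mx A with hM
  set t := tSt A with ht
  have hsM : s ≤ M := le_Mx (mnn_mem hne)
  have hs1 : 1 ≤ s := hpos _ (mnn_mem hne)
  have ht1 : 1 ≤ t := tSt_pos hpos hne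
  have htM : t ≤ M := tSt_le_Mx hpos hne
  have hbot : s ≤ M - t + 1 := mnn_le_run_bot hpos hne
  have hkey : 2 * t < M := by
    have h0 : 2 * t ≤ M := by omega
    rcases Nat.lt_or_ge (2*t) M with h | h
    · exact h
    · exfalso
      have h1 : s = M - t + 1 := by omega
      have h2 : A = Icc s M := interval_of_bot hpos hne h1
      refine hnex ⟨t, ht1, Or.inr ?_⟩
      rw [h2]
      have e1 : s = t + 1 := by omega
      have e2 : M = 2*t := by omega
      rw [e1, e2]
  have htnotinA : t ∉ A := fun hc => by have := mnn_le hc; omega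
  have hMtnotinA : M - t ∉ A := tSt_spec hpos hne
  have hMinA : M ∈ A := Mx_mem hne
  set ee := A.erase M with hee
  set B := insert t (insert (M - t) ee) with hB
  have hBdef : phi A = B := by rw [phi, if_neg (by omega)]
  have htne : t ≠ M - t := by omega
  have hMt_not_ee : M - t ∉ ee := fun hc => hMtnotinA (Finset.mem_of_mem_erase hc)
  have ht_not_inner : t ∉ insert (M - t) ee := by
    rw [Finset.mem_insert]
    rintro (h | h)
    · exact htne h
    · exact htnotinA (Finset.mem_of_mem_erase h)
  have hB_mem : ∀ x, x ∈ B ↔ (x = t ∨ x = M - t ∨ (x ≠ M ∧ x ∈ A)) := by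
    intro x
    rw [hB, Finset.mem_insert, Finset.mem_insert, hee, Finset.mem_erase]
  have hsum1 : M + ∑ i ∈ ee, i = n := by
    rw [hee]
    exact (Finset.add_sum_erase A (fun i => i) hMinA).trans hsum
  have hsumB : ∑ i ∈ B, i = n := by
    rw [hB, Finset.sum_insert ht_not_inner, Finset.sum_insert hMt_not_ee]
    omega
  have hBd : B ∈ dpS n := by
    rw [mem_dpS]
    refine ⟨fun x hx => ?_, hsumB⟩
    rw [mem_Icc]
    refine ⟨?_, le_of_le_of_eq (single_le_sum_nat hx) hsumB⟩
    rcases (hB_mem x).1 hx with h | h | h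
    · omega
    · omega
    · exact hpos x h.2
  have hcardB : B.card = A.card + 1 := by
    rw [hB, Finset.card_insert_of_notMem ht_not_inner,
      Finset.card_insert_of_notMem hMt_not_ee, hee, Finset.card_erase_of_mem hMinA]
    have hcard1 : 1 ≤ A.card := Finset.card_pos.2 hne
    omega
  have hBne : B.Nonempty := ⟨t, by rw [hB]; exact Finset.mem_insert_self _ _⟩
  have hBpos : ∀ x ∈ B, 1 ≤ x := fun x hx => (mem_Icc.1 ((mem_dpS.1 hBd).1 hx)).1
  have hMxB : Mx B = M - 1 := by
    apply Mx_eq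
    · rw [hB_mem]
      rcases Nat.eq_or_lt_of_le ht1 with h | h
      · right; left; omega
      · right; right
        have h2 : M - 1 ∈ A := by
          have := tSt_run hpos hne 1 (by omega)
          exact this
        exact ⟨by omega, h2⟩
    · intro y hy
      rcases (hB_mem y).1 hy with h | h | h
      · omega
      · omega
      · have := le_Mx h.2
        omega
  have hmnnB : mnn B = t := by
    apply mnn_eq
    · rw [hB_mem]; left; rfl
    · intro y hy
      rcases (hB_mem y).1 hy with h | h | h
      · omega
      · omega
      · have := mnn_le h.2
        omega
  have htBge : t ≤ tSt B := by
    apply tSt_ge hBpos hBne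
    intro j hj
    rw [hMxB, hB_mem]
    rcases Nat.eq_or_lt_of_le (by omega : j + 1 ≤ t) with h | h
    · right; left; omega
    · right; right
      have h2 : M - (j+1) ∈ A := tSt_run hpos hne (j+1) h
      have h3 : M - 1 - j = M - (j+1) := by omega
      rw [h3]
      exact ⟨by omega, h2⟩
  have hphiB : phi B = A := by
    rw [phi, if_pos (by omega : mnn B ≤ tSt B)]
    rw [hMxB, hmnnB]
    have e1 : M - 1 + 1 = M := by omega
    have e2 : M - 1 - t + 1 = M - t := by omega
    rw [e1, e2]
    have h2 : B.erase t = insert (M - t) ee := by rw [hB]; exact Finset.erase_insert ht_not_inner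
    rw [h2, Finset.erase_insert hMt_not_ee, hee, Finset.insert_erase hMinA]
  have hnexB : ¬ Exc B := by
    rintro ⟨m0, hm0, hB1 | hB2⟩
    · have hle : m0 ≤ 2*m0 - 1 := by omega
      have h1 : mnn B = m0 := by rw [hB1]; exact mnn_Icc hle
      have h2 : Mx B = 2*m0 - 1 := by rw [hB1]; exact Mx_Icc hle
      omega
    · have hle : m0+1 ≤ 2*m0 := by omega
      have h1 : mnn B = m0+1 := by rw [hB2]; exact mnn_Icc hle
      have h2 : Mx B = 2*m0 := by rw [hB2]; exact Mx_Icc hle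
      omega
  rw [hBdef]
  exact ⟨hBd, hnexB, hcardB, hphiB⟩
lemma Icc1_le_P1 {m : ℕ} (hm : 1 ≤ m) : 2*m - 1 ≤ P1 m := by
  obtain ⟨j, rfl⟩ : ∃ j, m = j + 1 := ⟨m - 1, by omega⟩
  have h1 := two_P1 (j+1)
  have h2 : 3*(j+1)*(j+1) ≥ 5*j + 3 := by nlinarith
  omega

lemma Icc2_le_P2 {m : ℕ} (hm : 1 ≤ m) : 2*m ≤ P2 m := by
  have h1 := two_P2 m
  have h2 : 3*m*m + m ≥ 4*m := by nlinarith
  omega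

lemma dpS_Icc1 {m n : ℕ} (hm : 1 ≤ m) (h : n = P1 m) : Icc m (2*m-1) ∈ dpS n := by
  rw [mem_dpS]
  constructor
  · intro x hx
    rw [mem_Icc] at hx ⊢
    have := Icc1_le_P1 hm
    omega
  · rw [sum_Icc_P1 m hm, h]

lemma dpS_Icc2 {m n : ℕ} (hm : 1 ≤ m) (h : n = P2 m) : Icc (m+1) (2*m) ∈ dpS n := by
  rw [mem_dpS]
  constructor
  · intro x hx
    rw [mem_Icc] at hx ⊢
    have := Icc2_le_P2 hm
    omega
  · rw [sum_Icc_P2 m hm, h]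

lemma exc_filter_card {n : ℕ} (hn : 1 ≤ n) :
    ((dpS n).filter Exc).card = if IsPent n then 1 else 0 := by
  by_cases hp : IsPent n
  · rw [if_pos hp]
    obtain ⟨k, hk | hk⟩ := hp
    · have hk1 : 1 ≤ k := by
        by_contra hc
        push_neg at hc
        interval_cases k
        · simp [P1] at hk; omega
      rw [Finset.card_eq_one]
      refine ⟨Icc k (2*k-1), ?_⟩
      ext A
      simp only [Finset.mem_filter, Finset.mem_singleton]
      constructor
      · rintro ⟨hAd, m0, hm0, h1 | h2⟩
        · have hs := (mem_dpS.1 hAd).2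
          rw [h1, sum_Icc_P1 m0 hm0] at hs
          have : m0 = k := P1_strictMono.injective (by omega)
          rw [h1, this]
        · have hs := (mem_dpS.1 hAd).2
          rw [h2, sum_Icc_P2 m0 hm0] at hs
          exact absurd (by omega : P1 k = P2 m0) (P1_ne_P2 hm0 hk1)
      · rintro rfl
        exact ⟨dpS_Icc1 hk1 hk, ⟨k, hk1, Or.inl rfl⟩⟩
    · have hk1 : 1 ≤ k := by
        by_contra hc
        push_neg at hc
        interval_cases k
        · simp [P2] at hk; omega
      rw [Finset.card_eq_one]
      refine ⟨Icc (k+1) (2*k), ?_⟩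
      ext A
      simp only [Finset.mem_filter, Finset.mem_singleton]
      constructor
      · rintro ⟨hAd, m0, hm0, h1 | h2⟩
        · have hs := (mem_dpS.1 hAd).2
          rw [h1, sum_Icc_P1 m0 hm0] at hs
          exact absurd (by omega : P1 m0 = P2 k) (P1_ne_P2 hk1 hm0)
        · have hs := (mem_dpS.1 hAd).2
          rw [h2, sum_Icc_P2 m0 hm0] at hs
          have : m0 = k := P2_strictMono.injective (by omega)
          rw [h2, this]
      · rintro rfl
        exact ⟨dpS_Icc2 hk1 hk, ⟨k, hk1, Or.inr rfl⟩⟩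
  · rw [if_neg hp, Finset.card_eq_zero, Finset.filter_eq_empty_iff]
    intro A hAd
    rintro ⟨m0, hm0, h1 | h2⟩
    · refine hp ⟨m0, Or.inl ?_⟩
      have hs := (mem_dpS.1 hAd).2
      rw [h1, sum_Icc_P1 m0 hm0] at hs
      omega
    · refine hp ⟨m0, Or.inr ?_⟩
      have hs := (mem_dpS.1 hAd).2
      rw [h2, sum_Icc_P2 m0 hm0] at hs
      omega

lemma dpS_zero : dpS 0 = {∅} := by
  unfold dpS
  rw [show Icc 1 0 = (∅ : Finset ℕ) from rfl, Finset.powerset_empty, Finset.filter_singleton,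
    if_pos (by simp)]

lemma dpS_nonempty_mem {n : ℕ} (hn : 1 ≤ n) {A : Finset ℕ} (hA : A ∈ dpS n) : A.Nonempty := by
  rcases Finset.eq_empty_or_nonempty A with h | h
  · exfalso
    have := (mem_dpS.1 hA).2
    rw [h] at this
    simp at this
    omega
  · exact h

lemma franklin (n : ℕ) : (((dpS n).card : ℕ) : ZMod 2) = if IsPent n then 1 else 0 := by
  rcases Nat.eq_zero_or_pos n with rfl | hn
  · rw [dpS_zero, if_pos isPent_zero]
    rfl
  have hsplit : (((dpS n).card : ℕ) : ZMod 2) = ∑ _A ∈ dpS n, (1 : ZMod 2) := by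
    rw [Finset.sum_const, nsmul_eq_mul, mul_one]
  rw [hsplit, ← Finset.sum_filter_add_sum_filter_not (dpS n) Exc]
  have h2 : ∑ _A ∈ (dpS n).filter (fun A => ¬ Exc A), (1:ZMod 2) = 0 := by
    apply Finset.sum_involution (fun A _ => phi A)
    · intro A _
      decide
    · intro A ha _
      rw [Finset.mem_filter] at ha
      have hne := dpS_nonempty_mem hn ha.1
      rcases le_or_gt (mnn A) (tSt A) with h | h
      · obtain ⟨_, _, hc, _⟩ := phi_case1 ha.1 ha.2 hne h
        intro heq
        rw [heq] at hc
        omega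
      · obtain ⟨_, _, hc, _⟩ := phi_case2 ha.1 ha.2 hne h
        intro heq
        rw [heq] at hc
        omega
    · intro A ha
      rw [Finset.mem_filter] at ha ⊢
      have hne := dpS_nonempty_mem hn ha.1
      rcases le_or_gt (mnn A) (tSt A) with h | h
      · obtain ⟨h1, h2, _, _⟩ := phi_case1 ha.1 ha.2 hne h
        exact ⟨h1, h2⟩
      · obtain ⟨h1, h2, _, _⟩ := phi_case2 ha.1 ha.2 hne h
        exact ⟨h1, h2⟩
    · intro A ha
      rw [Finset.mem_filter] at ha
      have hne := dpS_nonempty_mem hn ha.1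
      rcases le_or_gt (mnn A) (tSt A) with h | h
      · exact (phi_case1 ha.1 ha.2 hne h).2.2.2
      · exact (phi_case2 ha.1 ha.2 hne h).2.2.2
  rw [h2, add_zero]
  have h3 : ∑ _A ∈ (dpS n).filter Exc, (1:ZMod 2) = ((((dpS n).filter Exc).card : ℕ) : ZMod 2) := by
    rw [Finset.sum_const, nsmul_eq_mul, mul_one]
  rw [h3, exc_filter_card hn]
  split <;> simp
open PowerSeries

noncomputable def Pprod (a N : ℕ) : PowerSeries ℤ :=
  ∏ i ∈ Icc 1 N, (1 - (X : PowerSeries ℤ) ^ (a * i))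

lemma coeff_Pprod (a N n : ℕ) :
    coeff n (Pprod a N) =
      ∑ t ∈ (Icc 1 N).powerset.filter (fun t => a * ∑ i ∈ t, i = n), (-1 : ℤ)^t.card := by
  have h1 : Pprod a N =
      ∑ t ∈ (Icc 1 N).powerset, C (R := ℤ) ((-1)^t.card) * X ^ (a * ∑ i ∈ t, i) := by
    unfold Pprod
    have h2 : ∀ i ∈ Icc 1 N, (1 - (X : PowerSeries ℤ) ^ (a * i)) =
        (-(X ^ (a*i))) + 1 := by intro i _; ring
    rw [Finset.prod_congr rfl h2, Finset.prod_add]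
    apply Finset.sum_congr rfl
    intro t _
    rw [Finset.prod_const_one, mul_one]
    have h3 : ∀ i ∈ t, -((X : PowerSeries ℤ) ^ (a*i)) = (-1) * X ^ (a*i) := by
      intro i _; ring
    rw [Finset.prod_congr rfl h3, Finset.prod_mul_distrib, Finset.prod_const,
      Finset.prod_pow_eq_pow_sum, ← Finset.mul_sum]
    congr 1
    rw [map_pow, map_neg, map_one]
  rw [h1, map_sum]
  rw [Finset.sum_filter]
  apply Finset.sum_congr rfl
  intro t _
  rw [coeff_C_mul, PowerSeries.coeff_X_pow]
  by_cases h : a * ∑ i ∈ t, i = n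
  · rw [if_pos h, if_pos h.symm, mul_one]
  · rw [if_neg h, if_neg (fun hc => h hc.symm), mul_zero]

lemma filter_stable (a n N N' : ℕ) (ha : 1 ≤ a) (hN : n ≤ N) (hN' : n ≤ N') :
    (Icc 1 N).powerset.filter (fun t => a * ∑ i ∈ t, i = n) =
      (Icc 1 N').powerset.filter (fun t => a * ∑ i ∈ t, i = n) := by
  have key : ∀ M : ℕ, n ≤ M → ∀ t : Finset ℕ,
      t ∈ (Icc 1 M).powerset.filter (fun t => a * ∑ i ∈ t, i = n) →
      (∀ x ∈ t, 1 ≤ x ∧ x ≤ n) := by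
    intro M hM t ht x hx
    rw [Finset.mem_filter, Finset.mem_powerset] at ht
    obtain ⟨hsub, hsum⟩ := ht
    have h1 : 1 ≤ x := (Finset.mem_Icc.1 (hsub hx)).1
    have h2 : x ≤ ∑ i ∈ t, i := Finset.single_le_sum (fun i _ => Nat.zero_le i) hx
    have h3 : (∑ i ∈ t, i) ≤ a * ∑ i ∈ t, i := Nat.le_mul_of_pos_left _ ha
    omega
  ext t
  simp only [Finset.mem_filter, Finset.mem_powerset]
  constructor
  · rintro ⟨hsub, hsum⟩
    refine ⟨fun x hx => ?_, hsum⟩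
    have := key N hN t (by simp [Finset.mem_filter, Finset.mem_powerset, hsub, hsum]) x hx
    rw [Finset.mem_Icc]
    omega
  · rintro ⟨hsub, hsum⟩
    refine ⟨fun x hx => ?_, hsum⟩
    have := key N' hN' t (by simp [Finset.mem_filter, Finset.mem_powerset, hsub, hsum]) x hx
    rw [Finset.mem_Icc]
    omega

lemma coeff_fEta (a n : ℕ) (ha : 1 ≤ a) {N : ℕ} (hN : n ≤ N) :
    coeff n (fEta a) = coeff n (Pprod a N) := by
  have h1 : coeff n (fEta a) = coeff n (Pprod a (n+1)) := by
    unfold fEta Pprod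
    rw [coeff_mk]
  rw [h1, coeff_Pprod, coeff_Pprod, filter_stable a n (n+1) N ha (by omega) hN]

/-- reduction mod 2 -/
noncomputable abbrev toZ2 : PowerSeries ℤ →+* PowerSeries (ZMod 2) :=
  PowerSeries.map (Int.castRingHom (ZMod 2))

lemma coeff_toZ2 (f : PowerSeries ℤ) (n : ℕ) :
    coeff n (toZ2 f) = ((coeff n f : ℤ) : ZMod 2) := by
  rw [PowerSeries.coeff_map]; rfl

lemma coeff_Pprod_z2 (a N n : ℕ) :
    ((coeff n (Pprod a N) : ℤ) : ZMod 2) =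
      ((((Icc 1 N).powerset.filter (fun t => a * ∑ i ∈ t, i = n)).card : ℕ) : ZMod 2) := by
  rw [coeff_Pprod, Int.cast_sum]
  have h1 : ∀ t : Finset ℕ, (((-1 : ℤ)^t.card : ℤ) : ZMod 2) = 1 := by
    intro t
    rw [Int.cast_pow]
    have : ((-1 : ℤ) : ZMod 2) = 1 := by decide
    rw [this, one_pow]
  rw [Finset.sum_congr rfl (fun t _ => h1 t), Finset.sum_const, nsmul_eq_mul, mul_one]

lemma coeff_fEta_z2 (a n : ℕ) (ha : 1 ≤ a) :
    ((coeff n (fEta a) : ℤ) : ZMod 2) =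
      if a ∣ n ∧ IsPent (n / a) then 1 else 0 := by
  rw [coeff_fEta a n ha (le_refl n), coeff_Pprod_z2]
  by_cases hdvd : a ∣ n
  · obtain ⟨r, hr⟩ := hdvd
    have hrn : r ≤ n := by
      subst hr
      exact Nat.le_mul_of_pos_left r ha
    have hfil : (Icc 1 n).powerset.filter (fun t => a * ∑ i ∈ t, i = n) = dpS r := by
      have h2 : ∀ t : Finset ℕ, (a * ∑ i ∈ t, i = n) ↔ (1 * ∑ i ∈ t, i = r) := by
        intro t
        rw [one_mul, hr]
        constructor
        · intro h; exact Nat.eq_of_mul_eq_mul_left (by omega) h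
        · intro h; rw [h]
      rw [Finset.filter_congr (fun t _ => h2 t)]
      rw [filter_stable 1 r n r (le_refl 1) hrn (le_refl r)]
      unfold dpS
      apply Finset.filter_congr
      intro t _
      rw [one_mul]
    have hdiv : n / a = r := by rw [hr]; exact Nat.mul_div_cancel_left r (by omega)
    rw [hfil, franklin, hdiv]
    have hd : a ∣ n := ⟨r, hr⟩
    by_cases hip : IsPent r
    · rw [if_pos hip, if_pos ⟨hd, hip⟩]
    · rw [if_neg hip, if_neg (fun hc => hip hc.2)]
  · have hfil : (Icc 1 n).powerset.filter (fun t => a * ∑ i ∈ t, i = n) = ∅ := by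
      apply Finset.filter_false_of_mem
      intro t _
      intro hc
      exact hdvd ⟨_, hc.symm⟩
    rw [hfil, if_neg (fun hc => hdvd hc.1)]
    simp
lemma sq_one_sub (y : PowerSeries (ZMod 2)) : (1 - y)^2 = 1 - y^2 := by
  have hC : (PowerSeries.C (R := ZMod 2)) (1+1) = 0 := by
    rw [show (1:ZMod 2)+1 = (0:ZMod 2) from by decide, map_zero]
  have h1 : y + y = 0 := by
    calc y + y = PowerSeries.C (R := ZMod 2) (1+1) * y := by
          rw [map_add, map_one, add_mul, one_mul]
    _ = 0 := by rw [hC, zero_mul]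
  linear_combination (y - 1) * h1

lemma toZ2_Pprod (a N : ℕ) :
    toZ2 (Pprod a N) = ∏ i ∈ Icc 1 N, (1 - (X : PowerSeries (ZMod 2)) ^ (a * i)) := by
  unfold Pprod
  rw [map_prod]
  apply Finset.prod_congr rfl
  intro i _
  rw [map_sub, map_one, map_pow, PowerSeries.map_X]

lemma coeff_fEta_sq (a n : ℕ) (ha : 1 ≤ a) :
    coeff n (fEta a * fEta a) = coeff n (Pprod a n * Pprod a n) := by
  rw [PowerSeries.coeff_mul, PowerSeries.coeff_mul]
  apply Finset.sum_congr rfl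
  intro p hp
  rw [Finset.HasAntidiagonal.mem_antidiagonal] at hp
  rw [coeff_fEta a p.1 ha (N := n) (by omega), coeff_fEta a p.2 ha (N := n) (by omega)]

lemma frobenius_step (a : ℕ) (ha : 1 ≤ a) :
    (toZ2 (fEta a))^2 = toZ2 (fEta (2*a)) := by
  ext n
  rw [pow_two, ← map_mul, coeff_toZ2, coeff_fEta_sq a n ha]
  have h1 : ((coeff n (Pprod a n * Pprod a n) : ℤ) : ZMod 2) =
      coeff n (toZ2 (Pprod a n * Pprod a n)) := (coeff_toZ2 _ n).symm
  rw [h1, map_mul, ← pow_two, toZ2_Pprod, ← Finset.prod_pow]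
  have h2 : ∀ i ∈ Icc 1 n, (1 - (X : PowerSeries (ZMod 2)) ^ (a * i))^2 =
      (1 - (X : PowerSeries (ZMod 2)) ^ (2*a*i)) := by
    intro i _
    have e : (X : PowerSeries (ZMod 2))^(2*a*i) = ((X : PowerSeries (ZMod 2))^(a*i))^2 := by
      rw [← pow_mul, show a*i*2 = 2*a*i from by ring]
    rw [e]
    exact sq_one_sub _
  rw [Finset.prod_congr rfl h2, ← toZ2_Pprod (2*a) n, coeff_toZ2, ← coeff_fEta (2*a) n (by omega) (le_refl n), coeff_toZ2]

lemma frobenius_pow (d : ℕ) : (toZ2 (fEta 1))^(2^d) = toZ2 (fEta (2^d)) := by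
  induction d with
  | zero => simp
  | succ d ih =>
    have h1 : (2:ℕ)^(d+1) = 2^d * 2 := by ring
    rw [h1, pow_mul, ih, frobenius_step (2^d) Nat.one_le_two_pow,
      show (2:ℕ) * 2^d = 2^d * 2 from by ring]

lemma zmod2_int_one_iff (c : ℤ) : ((c : ZMod 2) = 1) ↔ Odd c := by
  have h1 : ((c : ZMod 2) = 0) ↔ (2 : ℤ) ∣ c := by
    have := ZMod.intCast_zmod_eq_zero_iff_dvd c 2
    simpa using this
  have h2 : ∀ x : ZMod 2, x = 1 ↔ ¬ x = 0 := by decide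
  have h3 : (2:ℤ) ∣ c ↔ Even c :=
    ⟨fun ⟨k,hk⟩ => ⟨k, by omega⟩, fun ⟨k,hk⟩ => ⟨k, by omega⟩⟩
  rw [h2, h1, h3, ← Int.not_even_iff_odd]

lemma zmod2_nat_one_iff (c : ℕ) : ((c : ZMod 2) = 1) ↔ Odd c := by
  have h1 : ((c : ZMod 2) = 0) ↔ (2 : ℕ) ∣ c := by
    have := ZMod.natCast_eq_zero_iff c 2
    simpa using this
  have h2 : ∀ x : ZMod 2, x = 1 ↔ ¬ x = 0 := by decide
  have h3 : (2:ℕ) ∣ c ↔ Even c :=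
    ⟨fun ⟨k,hk⟩ => ⟨k, by omega⟩, fun ⟨k,hk⟩ => ⟨k, by omega⟩⟩
  rw [h2, h1, h3, ← Nat.not_even_iff_odd]

lemma card_filter_dvd_pent (D n : ℕ) (hD : 1 ≤ D) :
    ((range (n+1)).filter (fun i => D ∣ i ∧ IsPent (i / D))).card = pentCount (n / D) := by
  unfold pentCount
  apply Finset.card_bij' (fun i _ => i / D) (fun r _ => D * r)
  · intro i hi
    rw [Finset.mem_filter, Finset.mem_range] at hi
    obtain ⟨hin, hdvd, hpent⟩ := hi
    rw [Finset.mem_filter, Finset.mem_range]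
    exact ⟨by have := Nat.div_le_div_right (c := D) (by omega : i ≤ n); omega, hpent⟩
  · intro r hr
    rw [Finset.mem_filter, Finset.mem_range] at hr
    obtain ⟨hrn, hpent⟩ := hr
    rw [Finset.mem_filter, Finset.mem_range]
    refine ⟨?_, ⟨r, rfl⟩, ?_⟩
    · have h1 : r ≤ n / D := by omega
      have h2 : D * r ≤ D * (n / D) := Nat.mul_le_mul_left D h1
      have h3 : D * (n / D) ≤ n := Nat.mul_div_le n D
      omega
    · rw [Nat.mul_div_cancel_left r (by omega)]
      exact hpent
  · intro i hi
    rw [Finset.mem_filter, Finset.mem_range] at hi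
    exact Nat.mul_div_cancel' hi.2.1
  · intro r hr
    exact Nat.mul_div_cancel_left r (by omega)

lemma coeff_main (d n : ℕ) :
    Odd (coeff n (fEta 1 ^ 2^d * geomZ)) ↔ OddAt (n / 2^d) := by
  rw [← zmod2_int_one_iff]
  have h0 : ((coeff n (fEta 1 ^ 2^d * geomZ) : ℤ) : ZMod 2) =
      coeff n (toZ2 (fEta 1 ^ 2^d * geomZ)) := (coeff_toZ2 _ n).symm
  rw [h0, map_mul, map_pow, frobenius_pow d]
  have hgeom : ∀ j : ℕ, coeff j (toZ2 geomZ) = 1 := by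
    intro j
    rw [coeff_toZ2]
    unfold geomZ
    rw [PowerSeries.coeff_mk]
    norm_num
  rw [PowerSeries.coeff_mul, Finset.Nat.sum_antidiagonal_eq_sum_range_succ_mk]
  have h1 : ∀ k ∈ range (n+1),
      coeff k (toZ2 (fEta (2^d))) * coeff (n - k) (toZ2 geomZ) =
      if 2^d ∣ k ∧ IsPent (k / 2^d) then 1 else 0 := by
    intro k _
    rw [hgeom, mul_one, coeff_toZ2, coeff_fEta_z2 (2^d) k Nat.one_le_two_pow]
  rw [Finset.sum_congr rfl h1, Finset.sum_boole, card_filter_dvd_pent (2^d) n Nat.one_le_two_pow]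
  rw [zmod2_nat_one_iff]
  exact odd_pentCount _

/-- For any positive integer `d`, the number of odd coefficients of
`f_1^{2^d}/(1-q)` in degrees `n ≤ x` is asymptotic to `2x/3`. -/
theorem oddCount_fEta_pow_mul_geom_asymp (d : ℕ) (hd : 0 < d) :
    Filter.Tendsto (fun x : ℕ => (oddCount ((fEta 1) ^ (2 ^ d) * geomZ) x : ℝ) / x)
      Filter.atTop (nhds (2 / 3)) := by
  have hchar : ∀ x, oddCount ((fEta 1) ^ (2 ^ d) * geomZ) x = Qcnt (2^d) x := by
    intro x
    unfold oddCount Qcnt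
    congr 1
    apply Finset.filter_congr
    intro n _
    first
    | exact coeff_main d n
    | exact propext (coeff_main d n)
  exact (Qcnt_tendsto (2^d) (by positivity)).congr (fun x => by rw [hchar])
end
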